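/- arXiv:2601.01484 — 6 statements merged into one kernel-verified Lean document; each statement's English description precedes it below -/
import Mathlib

section
/- (SGD convergence under interpolation, parameter form.) Let f(θ) = E_ξ[f_ξ(θ)] where each f_ξ is differentiable, f is μ-strongly quasi-convex with minimizer θ*, the family satisfies expected smoothness E_ξ[‖∇f_ξ(θ) − ∇f_ξ(θ*)‖²] ≤ 2ℒ(f(θ) − f(θ*)), and interpolation holds in the sense ∇f_ξ(θ*) = 0 for all ξ. Then SGD iterates θ^{t+1} = θ^t − α ∇f_{ξ_t}(θ^t) with ξ_t i.i.d. and step-size 0 < α ≤ 1/ℒ satisfy E[‖θ^t − θ*‖²] ≤ (1 − αμ)^t ‖θ^0 − θ*‖². -/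
open MeasureTheory

/-- Tonelli-type inequality for arbitrary functions on a product measure. -/
theorem my_lintegral_prod_le {α β : Type*} [MeasurableSpace α] [MeasurableSpace β]
    (μ : Measure α) (ν : Measure β) [SFinite ν] (f : α × β → ENNReal) :
    ∫⁻ z, f z ∂(μ.prod ν) ≤ ∫⁻ x, ∫⁻ y, f (x, y) ∂ν ∂μ := by
  rw [lintegral]
  refine iSup₂_le fun φ hφ => ?_
  calc φ.lintegral (μ.prod ν) = ∫⁻ z, φ z ∂(μ.prod ν) :=
        (SimpleFunc.lintegral_eq_lintegral _ _).symm
    _ = ∫⁻ x, ∫⁻ y, φ (x, y) ∂ν ∂μ := lintegral_prod _ φ.measurable.aemeasurable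
    _ ≤ ∫⁻ x, ∫⁻ y, f (x, y) ∂ν ∂μ :=
        lintegral_mono fun x => lintegral_mono fun y => hφ _

/-- One step of SGD: decrease of the expected squared distance. -/
theorem onestep {Ω : Type*} [MeasurableSpace Ω] (μ : Measure Ω) [IsProbabilityMeasure μ]
    {E : Type*} [NormedAddCommGroup E] [InnerProductSpace ℝ E] [CompleteSpace E]
    (g : Ω → E) (G : E) (θ θs : E) (α μc ℒ S : ℝ)
    (hα : 0 < α) (hαℒ : α * ℒ ≤ 1)
    (hgint : Integrable g μ) (hG : ∫ ω, g ω ∂μ = G)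
    (hgsq : Integrable (fun ω => ‖g ω‖ ^ 2) μ)
    (hS : ∫ ω, ‖g ω‖ ^ 2 ∂μ ≤ 2 * ℒ * S) (hS0 : 0 ≤ S)
    (hquad : (inner ℝ G (θs - θ) : ℝ) + μc / 2 * ‖θs - θ‖ ^ 2 ≤ -S) :
    Integrable (fun ω => ‖θ - α • g ω - θs‖ ^ 2) μ ∧
    ∫ ω, ‖θ - α • g ω - θs‖ ^ 2 ∂μ ≤ (1 - α * μc) * ‖θ - θs‖ ^ 2 := by
  have hx : ∀ ω, ‖θ - α • g ω - θs‖ ^ 2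
      = ‖θ - θs‖ ^ 2 - 2 * α * (inner ℝ (θ - θs) (g ω) : ℝ) + α ^ 2 * ‖g ω‖ ^ 2 := by
    intro ω
    rw [sub_right_comm, norm_sub_sq_real, real_inner_smul_right, norm_smul]
    simp [mul_pow, sq_abs]
    ring
  have hint1 : Integrable (fun ω => (inner ℝ (θ - θs) (g ω) : ℝ)) μ := hgint.const_inner _
  have intAll : Integrable (fun ω => ‖θ - α • g ω - θs‖ ^ 2) μ := by
    simp only [hx]
    exact ((integrable_const _).sub (hint1.const_mul _)).add (hgsq.const_mul _)
  refine ⟨intAll, ?_⟩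
  have hval : ∫ ω, ‖θ - α • g ω - θs‖ ^ 2 ∂μ
      = ‖θ - θs‖ ^ 2 - 2 * α * (inner ℝ (θ - θs) G : ℝ) + α ^ 2 * ∫ ω, ‖g ω‖ ^ 2 ∂μ := by
    simp only [hx]
    have i1a : Integrable (fun ω => 2 * α * (inner ℝ (θ - θs) (g ω) : ℝ)) μ :=
      hint1.const_mul _
    have i1 : Integrable
        (fun ω => ‖θ - θs‖ ^ 2 - 2 * α * (inner ℝ (θ - θs) (g ω) : ℝ)) μ :=
      (integrable_const _).sub i1a
    have i2 : Integrable (fun ω => α ^ 2 * ‖g ω‖ ^ 2) μ := hgsq.const_mul _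
    rw [integral_add i1 i2, integral_sub (integrable_const _) i1a, integral_const,
      integral_const_mul, integral_const_mul, integral_inner hgint, hG]
    simp [measure_univ]
  rw [hval]
  have h1 : (inner ℝ (θ - θs) G : ℝ) = -(inner ℝ G (θs - θ) : ℝ) := by
    rw [real_inner_comm, ← inner_neg_right, neg_sub]
  have h2 : ‖θs - θ‖ = ‖θ - θs‖ := norm_sub_rev _ _
  rw [h2] at hquad
  have hI := hS
  nlinarith [mul_nonneg (mul_nonneg hα.le hS0) (sub_nonneg.mpr hαℒ),
    mul_le_mul_of_nonneg_left hS (sq_nonneg α), sq_nonneg α, sq_nonneg (‖θ - θs‖)]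

/-- SGD convergence under interpolation (parameter form): with strong quasi-convexity,
expected smoothness, and vanishing per-sample gradients at the optimum, SGD with
step-size `α ≤ 1/ℒ` converges linearly in expectation. -/
theorem sgd_interpolation_param {d : ℕ} {Ω : Type*} [MeasurableSpace Ω]
    (μ : Measure Ω) [IsProbabilityMeasure μ]
    (f : Ω → EuclideanSpace ℝ (Fin d) → ℝ)
    (F : EuclideanSpace ℝ (Fin d) → ℝ)
    (hF : ∀ θ, F θ = ∫ ω, f ω θ ∂μ)
    (θstar : EuclideanSpace ℝ (Fin d))
    (μc ℒ α : ℝ) (hμc : 0 < μc) (hℒ : 0 < ℒ)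
    (hdiff : ∀ ω, Differentiable ℝ (f ω)) (hdF : Differentiable ℝ F)
    (hmin : ∀ θ, F θstar ≤ F θ)
    (hsqc : ∀ θ, F θ + (inner ℝ (gradient F θ) (θstar - θ) : ℝ)
      + μc / 2 * ‖θstar - θ‖ ^ 2 ≤ F θstar)
    (hgradint : ∀ θ, Integrable (fun ω => gradient (f ω) θ) μ)
    (hgradF : ∀ θ, ∫ ω, gradient (f ω) θ ∂μ = gradient F θ)
    (hESint : ∀ θ, Integrable (fun ω => ‖gradient (f ω) θ - gradient (f ω) θstar‖ ^ 2) μ)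
    (hES : ∀ θ, ∫ ω, ‖gradient (f ω) θ - gradient (f ω) θstar‖ ^ 2 ∂μ
      ≤ 2 * ℒ * (F θ - F θstar))
    (hinterp : ∀ ω, gradient (f ω) θstar = 0)
    (hα : 0 < α) (hα' : α ≤ 1 / ℒ)
    (θ0 : EuclideanSpace ℝ (Fin d))
    (Θ : (t : ℕ) → (Fin t → Ω) → EuclideanSpace ℝ (Fin d))
    (hΘ0 : ∀ ω, Θ 0 ω = θ0)
    (hΘstep : ∀ t (ω : Fin (t + 1) → Ω),
      Θ (t + 1) ω = Θ t (fun i => ω i.castSucc)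
        - α • gradient (f (ω (Fin.last t))) (Θ t (fun i => ω i.castSucc)))
    (hΘmeas : ∀ t, Measurable (Θ t)) :
    ∀ t, ∫ ω, ‖Θ t ω - θstar‖ ^ 2 ∂(Measure.pi fun _ : Fin t => μ)
      ≤ (1 - α * μc) ^ t * ‖θ0 - θstar‖ ^ 2 := by
  rcases Nat.eq_zero_or_pos d with hd | hd
  · subst hd
    have hz : ∀ x : EuclideanSpace ℝ (Fin 0), x = 0 := fun x => by ext i; exact i.elim0
    intro t
    have h1 : ‖θ0 - θstar‖ = 0 := by rw [hz (θ0 - θstar)]; simp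
    have h2 : ∀ ω : Fin t → Ω, ‖Θ t ω - θstar‖ ^ 2 = 0 := fun ω => by
      rw [hz (Θ t ω - θstar)]; simp
    rw [h1]
    simp only [h2]
    simp
  -- main case : d ≥ 1
  have hgsq : ∀ θ, Integrable (fun ω => ‖gradient (f ω) θ‖ ^ 2) μ := by
    intro θ; simpa [hinterp] using hESint θ
  have hES' : ∀ θ, ∫ ω, ‖gradient (f ω) θ‖ ^ 2 ∂μ ≤ 2 * ℒ * (F θ - F θstar) := by
    intro θ; have := hES θ; simpa [hinterp] using this
  have hαℒ : α * ℒ ≤ 1 := by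
    rw [le_div_iff₀ hℒ] at hα'; linarith
  -- prove μc ≤ ℒ
  have hμℒ : μc ≤ ℒ := by
    set v : EuclideanSpace ℝ (Fin d) := EuclideanSpace.single ⟨0, hd⟩ (1 : ℝ) with hv
    have hvn : ‖v‖ = 1 := by simp [hv, EuclideanSpace.norm_single]
    set θ1 := θstar + v with hθ1
    have hsub : θ1 - θstar = v := add_sub_cancel_left θstar v
    have hsub' : ‖θstar - θ1‖ = 1 := by rw [norm_sub_rev, hsub, hvn]
    have hq := hsqc θ1
    rw [hsub'] at hq
    set S := F θ1 - F θstar with hSdef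
    have hS0 : 0 ≤ S := sub_nonneg.mpr (hmin θ1)
    -- inner product bound
    have h1 : (inner ℝ (gradient F θ1) (θ1 - θstar) : ℝ)
        ≤ ∫ ω, ‖gradient (f ω) θ1‖ ∂μ := by
      rw [← hgradF θ1, real_inner_comm, ← integral_inner (hgradint θ1)]
      refine integral_mono ((hgradint θ1).const_inner _) (hgradint θ1).norm fun ω => ?_
      calc (inner ℝ (θ1 - θstar) (gradient (f ω) θ1) : ℝ)
          ≤ ‖θ1 - θstar‖ * ‖gradient (f ω) θ1‖ := real_inner_le_norm _ _
        _ = ‖gradient (f ω) θ1‖ := by rw [hsub, hvn, one_mul]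
    have h2 : ∫ ω, ‖gradient (f ω) θ1‖ ∂μ ≤ S + ℒ / 2 := by
      have hle : ∫ ω, ‖gradient (f ω) θ1‖ ∂μ
          ≤ ∫ ω, (‖gradient (f ω) θ1‖ ^ 2 + ℒ ^ 2) / (2 * ℒ) ∂μ := by
        refine integral_mono (hgradint θ1).norm
          (((hgsq θ1).add (integrable_const _)).div_const _) fun ω => ?_
        rw [le_div_iff₀ (by positivity)]
        nlinarith [sq_nonneg (‖gradient (f ω) θ1‖ - ℒ)]
      have heq : ∫ ω, (‖gradient (f ω) θ1‖ ^ 2 + ℒ ^ 2) / (2 * ℒ) ∂μ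
          = ((∫ ω, ‖gradient (f ω) θ1‖ ^ 2 ∂μ) + ℒ ^ 2) / (2 * ℒ) := by
        rw [integral_div, integral_add (hgsq θ1) (integrable_const _), integral_const]
        simp [measure_univ]
      have hSS : ∫ ω, ‖gradient (f ω) θ1‖ ^ 2 ∂μ ≤ 2 * ℒ * S := by
        rw [hSdef]; exact hES' θ1
      rw [heq] at hle
      calc ∫ ω, ‖gradient (f ω) θ1‖ ∂μ
          ≤ ((∫ ω, ‖gradient (f ω) θ1‖ ^ 2 ∂μ) + ℒ ^ 2) / (2 * ℒ) := hle
        _ ≤ (2 * ℒ * S + ℒ ^ 2) / (2 * ℒ) := by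
            apply div_le_div_of_nonneg_right ?_ (by positivity)
            · linarith
        _ = S + ℒ / 2 := by field_simp
    have h3 : (inner ℝ (gradient F θ1) (θ1 - θstar) : ℝ)
        = -(inner ℝ (gradient F θ1) (θstar - θ1) : ℝ) := by
      rw [← inner_neg_right, neg_sub]
    rw [h3] at h1
    nlinarith
  have hkey : 0 ≤ 1 - α * μc := by nlinarith
  -- one-step estimate
  have step : ∀ θ : EuclideanSpace ℝ (Fin d),
      Integrable (fun ω => ‖θ - α • gradient (f ω) θ - θstar‖ ^ 2) μ ∧
      ∫ ω, ‖θ - α • gradient (f ω) θ - θstar‖ ^ 2 ∂μ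
        ≤ (1 - α * μc) * ‖θ - θstar‖ ^ 2 := by
    intro θ
    refine onestep μ (fun ω => gradient (f ω) θ) (gradient F θ) θ θstar α μc ℒ
      (F θ - F θstar) hα hαℒ (hgradint θ) (hgradF θ) (hgsq θ) (hES' θ)
      (sub_nonneg.mpr (hmin θ)) ?_
    have := hsqc θ
    linarith
  set B := ‖θ0 - θstar‖ ^ 2 with hB
  -- the ENNReal version by induction
  have claim : ∀ t, (∫⁻ ω, ENNReal.ofReal (‖Θ t ω - θstar‖ ^ 2)
      ∂(Measure.pi fun _ : Fin t => μ)) ≤ ENNReal.ofReal ((1 - α * μc) ^ t * B) := by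
    intro t
    induction t with
    | zero => simp [hΘ0, lintegral_const, measure_univ, hB]
    | succ t ih =>
      set π := (Measure.pi fun _ : Fin t => μ) with hπ
      set H : Ω × (Fin t → Ω) → ENNReal := fun p =>
        ENNReal.ofReal (‖Θ t p.2 - α • gradient (f p.1) (Θ t p.2) - θstar‖ ^ 2) with hH
      set e := MeasurableEquiv.piFinSuccAbove (fun _ : Fin (t + 1) => Ω) (Fin.last t) with he
      have hmp : MeasurePreserving e (Measure.pi fun _ : Fin (t + 1) => μ) (μ.prod π) :=
        measurePreserving_piFinSuccAbove (fun _ : Fin (t + 1) => μ) (Fin.last t)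
      have hGH : ∀ x : Fin (t + 1) → Ω,
          ENNReal.ofReal (‖Θ (t + 1) x - θstar‖ ^ 2) = H (e x) := by
        intro x
        simp only [hH, he, MeasurableEquiv.piFinSuccAbove, MeasurableEquiv.coe_mk,
          Equiv.symm_symm, Fin.insertNthEquiv_symm_apply, Fin.removeNth_last]
        rw [hΘstep t x]
        simp [MeasurableEquiv.piFinSuccAbove, Fin.insertNthEquiv]
        rfl
      calc ∫⁻ x, ENNReal.ofReal (‖Θ (t + 1) x - θstar‖ ^ 2)
            ∂(Measure.pi fun _ : Fin (t + 1) => μ)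
          = ∫⁻ x, H (e x) ∂(Measure.pi fun _ : Fin (t + 1) => μ) := by
            exact lintegral_congr hGH
        _ = ∫⁻ x, H (e x) ∂(Measure.map e.symm (μ.prod π)) := by
            rw [(MeasurePreserving.symm e hmp).map_eq]
        _ ≤ ∫⁻ p, H (e (e.symm p)) ∂(μ.prod π) :=
            lintegral_map_le _ _
        _ = ∫⁻ p, H p ∂(μ.prod π) := lintegral_congr fun p => by
            rw [e.apply_symm_apply]
        _ = ∫⁻ p, H p ∂(Measure.map Prod.swap (π.prod μ)) := by rw [Measure.prod_swap]
        _ ≤ ∫⁻ q, H (Prod.swap q) ∂(π.prod μ) := lintegral_map_le _ _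
        _ ≤ ∫⁻ r, ∫⁻ a, H (Prod.swap (r, a)) ∂μ ∂π := my_lintegral_prod_le _ _ _
        _ ≤ ∫⁻ r, ENNReal.ofReal ((1 - α * μc) * ‖Θ t r - θstar‖ ^ 2) ∂π := by
            refine lintegral_mono fun r => ?_
            have hint := (step (Θ t r)).1
            have hbd := (step (Θ t r)).2
            have : ∫⁻ a, H (Prod.swap (r, a)) ∂μ
                = ENNReal.ofReal (∫ a, ‖Θ t r - α • gradient (f a) (Θ t r) - θstar‖ ^ 2 ∂μ) := by
              rw [ofReal_integral_eq_lintegral_ofReal hint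
                (Filter.Eventually.of_forall fun a => sq_nonneg _)]
              rfl
            rw [this]
            exact ENNReal.ofReal_le_ofReal hbd
        _ = ENNReal.ofReal (1 - α * μc)
              * ∫⁻ r, ENNReal.ofReal (‖Θ t r - θstar‖ ^ 2) ∂π := by
            simp_rw [ENNReal.ofReal_mul hkey]
            rw [lintegral_const_mul' _ _ ENNReal.ofReal_ne_top]
        _ ≤ ENNReal.ofReal (1 - α * μc) * ENNReal.ofReal ((1 - α * μc) ^ t * B) :=
            mul_le_mul_right ih _
        _ = ENNReal.ofReal ((1 - α * μc) ^ (t + 1) * B) := by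
            rw [← ENNReal.ofReal_mul hkey]
            ring_nf
  intro t
  have hmeas : AEStronglyMeasurable (fun ω => ‖Θ t ω - θstar‖ ^ 2)
      (Measure.pi fun _ : Fin t => μ) :=
    (((hΘmeas t).sub measurable_const).norm.pow_const 2).aestronglyMeasurable
  rw [integral_eq_lintegral_of_nonneg_ae (Filter.Eventually.of_forall fun ω => sq_nonneg _) hmeas]
  exact ENNReal.toReal_le_of_le_ofReal
    (mul_nonneg (pow_nonneg hkey t) (sq_nonneg _)) (claim t)
end

section
/- (SGD convergence under interpolation, function-value form.) Let f(θ) = E_ξ[f_ξ(θ)] satisfy: f is L-smooth, f satisfies the PL condition with parameter μ > 0 (‖∇f(θ)‖² ≥ 2μ(f(θ) − f*)), expected smoothness E_ξ[‖∇f_ξ(θ) − ∇f_ξ(θ*)‖²] ≤ 2ℒ(f(θ) − f*), and ∇f_ξ(θ*) = 0 for all ξ. Then SGD with step-size 0 < α ≤ μ/(Lℒ) satisfies E[f(θ^t) − f*] ≤ (1 − αμ)^t (f(θ^0) − f*). -/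
open MeasureTheory


lemma sgd_descent_lemma {E : Type*} [NormedAddCommGroup E] [InnerProductSpace ℝ E]
    [CompleteSpace E] (F : E → ℝ) (L : ℝ) (hL : 0 ≤ L) (hdF : Differentiable ℝ F)
    (hsmooth : ∀ x y, ‖gradient F x - gradient F y‖ ≤ L * ‖x - y‖) (x y : E) :
    F y ≤ F x + inner ℝ (gradient F x) (y - x) + L / 2 * ‖y - x‖ ^ 2 := by
  set v := y - x with hv
  have hcont : Continuous (gradient F) := by
    refine (LipschitzWith.of_dist_le_mul (K := L.toNNReal) fun a b => ?_).continuous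
    rw [dist_eq_norm, dist_eq_norm]
    calc ‖gradient F a - gradient F b‖ ≤ L * ‖a - b‖ := hsmooth a b
    _ ≤ L.toNNReal * ‖a - b‖ := by
        gcongr
        exact le_max_left _ _
  have hline : ∀ t : ℝ, HasDerivAt (fun s : ℝ => F (x + s • v))
      (inner ℝ (gradient F (x + t • v)) v) t := by
    intro t
    have h1 : HasDerivAt (fun s : ℝ => x + s • v) v t := by
      simpa using ((hasDerivAt_id t).smul_const v).const_add x
    have h2 : HasFDerivAt F (InnerProductSpace.toDual ℝ E (gradient F (x + t • v)))
        (x + t • v) := (hdF _).hasGradientAt.hasFDerivAt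
    have := h2.comp_hasDerivAt t h1
    rw [InnerProductSpace.toDual_apply_apply] at this
    exact this
  have hcint : Continuous fun t : ℝ => (inner ℝ (gradient F (x + t • v)) v : ℝ) := by
    exact Continuous.inner (hcont.comp (by continuity)) continuous_const
  have key : F (x + (1:ℝ) • v) - F (x + (0:ℝ) • v)
      = ∫ t in (0:ℝ)..1, inner ℝ (gradient F (x + t • v)) v := by
    exact (intervalIntegral.integral_eq_sub_of_hasDerivAt (fun t _ => hline t)
      (hcint.intervalIntegrable 0 1)).symm
  have hmono : ∫ t in (0:ℝ)..1, (inner ℝ (gradient F (x + t • v)) v : ℝ)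
      ≤ ∫ t in (0:ℝ)..1, (inner ℝ (gradient F x) v + (L * ‖v‖ ^ 2) * t) := by
    refine intervalIntegral.integral_mono_on zero_le_one
      (hcint.intervalIntegrable 0 1)
      (intervalIntegrable_const.add ((continuous_mul_left (L * ‖v‖ ^ 2)).intervalIntegrable 0 1)) ?_
    intro t ht
    obtain ⟨ht0, ht1⟩ := Set.mem_Icc.mp ht
    have h1 : (inner ℝ (gradient F (x + t • v)) v : ℝ) - inner ℝ (gradient F x) v
        = inner ℝ (gradient F (x + t • v) - gradient F x) v := by
      rw [inner_sub_left]
    have h2 : (inner ℝ (gradient F (x + t • v) - gradient F x) v : ℝ)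
        ≤ ‖gradient F (x + t • v) - gradient F x‖ * ‖v‖ := real_inner_le_norm _ _
    have h3 : ‖gradient F (x + t • v) - gradient F x‖ ≤ L * (t * ‖v‖) := by
      have := hsmooth (x + t • v) x
      simpa [norm_smul, abs_of_nonneg ht0] using this
    nlinarith [norm_nonneg v, norm_nonneg (gradient F (x + t • v) - gradient F x),
      mul_nonneg (mul_nonneg hL ht0) (norm_nonneg v)]
  have hInt : ∫ t in (0:ℝ)..1, (inner ℝ (gradient F x) v + (L * ‖v‖ ^ 2) * t)
      = inner ℝ (gradient F x) v + L / 2 * ‖v‖ ^ 2 := by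
    rw [intervalIntegral.integral_add (intervalIntegrable_const)
      ((continuous_mul_left (L * ‖v‖ ^ 2)).intervalIntegrable 0 1),
      intervalIntegral.integral_const_mul, integral_id]
    simp
    ring
  have h01 : x + (1:ℝ) • v = y := by rw [hv]; module
  have h00 : x + (0:ℝ) • v = x := by simp
  rw [h01, h00] at key
  linarith [key, hmono, hInt.le, hInt.ge]


lemma sgd_one_step {d : ℕ} {Ω : Type*} [MeasurableSpace Ω]
    (μ : Measure Ω) [IsProbabilityMeasure μ]
    (f : Ω → EuclideanSpace ℝ (Fin d) → ℝ)
    (F : EuclideanSpace ℝ (Fin d) → ℝ)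
    (θstar : EuclideanSpace ℝ (Fin d))
    (μc L ℒ α : ℝ) (hμc : 0 < μc) (hL : 0 < L) (hℒ : 0 < ℒ)
    (hdF : Differentiable ℝ F)
    (hmin : ∀ θ, F θstar ≤ F θ)
    (hsmooth : ∀ θ₁ θ₂, ‖gradient F θ₁ - gradient F θ₂‖ ≤ L * ‖θ₁ - θ₂‖)
    (hPL : ∀ θ, 2 * μc * (F θ - F θstar) ≤ ‖gradient F θ‖ ^ 2)
    (hgradint : ∀ θ, Integrable (fun ω => gradient (f ω) θ) μ)
    (hgradF : ∀ θ, ∫ ω, gradient (f ω) θ ∂μ = gradient F θ)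
    (hESint : ∀ θ, Integrable (fun ω => ‖gradient (f ω) θ - gradient (f ω) θstar‖ ^ 2) μ)
    (hES : ∀ θ, ∫ ω, ‖gradient (f ω) θ - gradient (f ω) θstar‖ ^ 2 ∂μ
      ≤ 2 * ℒ * (F θ - F θstar))
    (hinterp : ∀ ω, gradient (f ω) θstar = 0)
    (hα : 0 < α) (hα' : α ≤ μc / (L * ℒ)) (θ : EuclideanSpace ℝ (Fin d)) :
    Integrable (fun ω => F (θ - α • gradient (f ω) θ) - F θstar) μ ∧
    ∫ ω, (F (θ - α • gradient (f ω) θ) - F θstar) ∂μ ≤ (1 - α * μc) * (F θ - F θstar) := by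
  set g : Ω → EuclideanSpace ℝ (Fin d) := fun ω => gradient (f ω) θ with hg
  have hG : 0 ≤ F θ - F θstar := sub_nonneg.2 (hmin θ)
  have hdesc : ∀ ω, F (θ - α • g ω) - F θstar
      ≤ F θ - F θstar - α * inner ℝ (gradient F θ) (g ω) + (L / 2 * α ^ 2) * ‖g ω‖ ^ 2 := by
    intro ω
    have h0 := sgd_descent_lemma F L hL.le hdF hsmooth θ (θ - α • g ω)
    have h1 : θ - α • g ω - θ = (-α) • g ω := by module
    rw [h1, real_inner_smul_right, norm_smul] at h0
    simp only [Real.norm_eq_abs, abs_neg, abs_of_pos hα] at h0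
    have : (α * ‖g ω‖) ^ 2 = α ^ 2 * ‖g ω‖ ^ 2 := by ring
    linarith [h0, sq_abs α, sq_nonneg ‖g ω‖]
  have hIg : Integrable g μ := hgradint θ
  have hI1 : Integrable (fun ω => (inner ℝ (gradient F θ) (g ω) : ℝ)) μ :=
    hIg.const_inner _
  have hI2 : Integrable (fun ω => ‖g ω‖ ^ 2) μ := by
    have := hESint θ
    simpa [hg, hinterp] using this
  have hRHSint : Integrable
      (fun ω => F θ - F θstar - α * inner ℝ (gradient F θ) (g ω) + (L / 2 * α ^ 2) * ‖g ω‖ ^ 2) μ :=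
    ((integrable_const _).sub (hI1.const_mul α)).add (hI2.const_mul _)
  have hnn : ∀ ω, 0 ≤ F (θ - α • g ω) - F θstar := fun ω => sub_nonneg.2 (hmin _)
  have hLHSmeas : AEStronglyMeasurable (fun ω => F (θ - α • g ω) - F θstar) μ := by
    exact (hdF.continuous.comp_aestronglyMeasurable
      (aestronglyMeasurable_const.sub (hIg.aestronglyMeasurable.const_smul α))).sub
      aestronglyMeasurable_const
  have hLHSint : Integrable (fun ω => F (θ - α • g ω) - F θstar) μ := by
    refine hRHSint.mono' hLHSmeas (ae_of_all _ fun ω => ?_)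
    rw [Real.norm_of_nonneg (hnn ω)]
    exact hdesc ω
  refine ⟨hLHSint, ?_⟩
  have hIS : ∫ ω, ‖g ω‖ ^ 2 ∂μ ≤ 2 * ℒ * (F θ - F θstar) := by
    have := hES θ
    simpa [hg, hinterp] using this
  have hintnn : 0 ≤ ∫ ω, ‖g ω‖ ^ 2 ∂μ := integral_nonneg fun ω => sq_nonneg _
  calc ∫ ω, (F (θ - α • g ω) - F θstar) ∂μ
      ≤ ∫ ω, (F θ - F θstar - α * inner ℝ (gradient F θ) (g ω) + (L / 2 * α ^ 2) * ‖g ω‖ ^ 2) ∂μ :=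
        integral_mono hLHSint hRHSint hdesc
    _ = F θ - F θstar - α * ‖gradient F θ‖ ^ 2 + (L / 2 * α ^ 2) * ∫ ω, ‖g ω‖ ^ 2 ∂μ := by
        have hsub : Integrable (fun ω => F θ - F θstar - α * inner ℝ (gradient F θ) (g ω)) μ :=
          (integrable_const _).sub (hI1.const_mul α)
        rw [integral_add (f := fun ω => F θ - F θstar - α * inner ℝ (gradient F θ) (g ω))
            (g := fun ω => (L / 2 * α ^ 2) * ‖g ω‖ ^ 2) hsub (hI2.const_mul _),
          integral_sub (f := fun _ => F θ - F θstar)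
            (g := fun ω => α * inner ℝ (gradient F θ) (g ω)) (integrable_const _)
            (hI1.const_mul α),
          integral_const_mul, integral_const_mul, integral_inner hIg, hgradF θ,
          real_inner_self_eq_norm_sq]
        simp
    _ ≤ (1 - α * μc) * (F θ - F θstar) := by
        have hPLθ := hPL θ
        have hαL : α * (L * ℒ) ≤ μc := by
          rwa [← le_div_iff₀ (mul_pos hL hℒ)]
        have c1 : α * (2 * μc * (F θ - F θstar)) ≤ α * ‖gradient F θ‖ ^ 2 :=
          mul_le_mul_of_nonneg_left hPLθ hα.le
        have c2 : L / 2 * α ^ 2 * ∫ ω, ‖g ω‖ ^ 2 ∂μ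
            ≤ L / 2 * α ^ 2 * (2 * ℒ * (F θ - F θstar)) :=
          mul_le_mul_of_nonneg_left hIS (by positivity)
        have c3 : L / 2 * α ^ 2 * (2 * ℒ * (F θ - F θstar)) ≤ α * μc * (F θ - F θstar) := by
          nlinarith [mul_le_mul_of_nonneg_right hαL (mul_nonneg hα.le hG)]
        nlinarith [c1, c2, c3]

/-- SGD convergence under interpolation (function-value form): with `L`-smoothness,
the PL condition, expected smoothness, and vanishing per-sample gradients at the
optimum, SGD with step-size `α ≤ μ/(Lℒ)` converges linearly in function value. -/
theorem sgd_interpolation_value {d : ℕ} {Ω : Type*} [MeasurableSpace Ω]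
    (μ : Measure Ω) [IsProbabilityMeasure μ]
    (f : Ω → EuclideanSpace ℝ (Fin d) → ℝ)
    (F : EuclideanSpace ℝ (Fin d) → ℝ)
    (hF : ∀ θ, F θ = ∫ ω, f ω θ ∂μ)
    (θstar : EuclideanSpace ℝ (Fin d))
    (μc L ℒ α : ℝ) (hμc : 0 < μc) (hL : 0 < L) (hℒ : 0 < ℒ)
    (hdiff : ∀ ω, Differentiable ℝ (f ω)) (hdF : Differentiable ℝ F)
    (hmin : ∀ θ, F θstar ≤ F θ)
    (hsmooth : ∀ θ₁ θ₂, ‖gradient F θ₁ - gradient F θ₂‖ ≤ L * ‖θ₁ - θ₂‖)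
    (hPL : ∀ θ, 2 * μc * (F θ - F θstar) ≤ ‖gradient F θ‖ ^ 2)
    (hgradint : ∀ θ, Integrable (fun ω => gradient (f ω) θ) μ)
    (hgradF : ∀ θ, ∫ ω, gradient (f ω) θ ∂μ = gradient F θ)
    (hESint : ∀ θ, Integrable (fun ω => ‖gradient (f ω) θ - gradient (f ω) θstar‖ ^ 2) μ)
    (hES : ∀ θ, ∫ ω, ‖gradient (f ω) θ - gradient (f ω) θstar‖ ^ 2 ∂μ
      ≤ 2 * ℒ * (F θ - F θstar))
    (hinterp : ∀ ω, gradient (f ω) θstar = 0)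
    (hα : 0 < α) (hα' : α ≤ μc / (L * ℒ))
    (θ0 : EuclideanSpace ℝ (Fin d))
    (Θ : (t : ℕ) → (Fin t → Ω) → EuclideanSpace ℝ (Fin d))
    (hΘ0 : ∀ ω, Θ 0 ω = θ0)
    (hΘstep : ∀ t (ω : Fin (t + 1) → Ω),
      Θ (t + 1) ω = Θ t (fun i => ω i.castSucc)
        - α • gradient (f (ω (Fin.last t))) (Θ t (fun i => ω i.castSucc)))
    (hΘmeas : ∀ t, Measurable (Θ t)) :
    ∀ t, ∫ ω, (F (Θ t ω) - F θstar) ∂(Measure.pi fun _ : Fin t => μ)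
      ≤ (1 - α * μc) ^ t * (F θ0 - F θstar) := by
  by_cases hdeg : ∀ θ', F θ' = F θstar
  · intro t
    simp [hdeg]
  push_neg at hdeg
  obtain ⟨θw, hw⟩ := hdeg
  have hGw : 0 < F θw - F θstar := sub_pos.2 ((hmin θw).lt_of_ne (Ne.symm hw))
  -- μc ≤ L
  have hgradsq : ‖gradient F θw‖ ^ 2 ≤ 2 * L * (F θw - F θstar) := by
    have h0 := sgd_descent_lemma F L hL.le hdF hsmooth θw (θw - L⁻¹ • gradient F θw)
    have h1 : θw - L⁻¹ • gradient F θw - θw = (-L⁻¹) • gradient F θw := by module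
    rw [h1, real_inner_smul_right, real_inner_self_eq_norm_sq, norm_smul] at h0
    simp only [Real.norm_eq_abs, abs_neg, abs_of_pos (inv_pos.2 hL)] at h0
    have h2 := hmin (θw - L⁻¹ • gradient F θw)
    rw [mul_pow, inv_pow] at h0
    have h0' : L * F (θw - L⁻¹ • gradient F θw)
        ≤ L * F θw - ‖gradient F θw‖ ^ 2 / 2 := by
      have hL2 : (L:ℝ)^2 ≠ 0 := pow_ne_zero 2 hL.ne'
      have : L * (-L⁻¹ * ‖gradient F θw‖ ^ 2) = -‖gradient F θw‖ ^ 2 := by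
        field_simp
      have h3 : L * (L / 2 * ((L ^ 2)⁻¹ * ‖gradient F θw‖ ^ 2))
          = ‖gradient F θw‖ ^ 2 / 2 := by
        field_simp
      nlinarith [mul_le_mul_of_nonneg_left h0 hL.le]
    nlinarith [h0', mul_le_mul_of_nonneg_left h2 hL.le]
  have hμL : μc ≤ L := by nlinarith [hPL θw, hgradsq, hGw]
  -- μc ≤ ℒ
  have hI2w : Integrable (fun ω => ‖gradient (f ω) θw‖ ^ 2) μ := by
    simpa [hinterp] using hESint θw
  have hNle : ‖gradient F θw‖ ^ 2 ≤ ∫ ω, ‖gradient (f ω) θw‖ ^ 2 ∂μ := by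
    have hIg := hgradint θw
    have h1 : ‖gradient F θw‖ ^ 2
        = ∫ ω, (inner ℝ (gradient F θw) (gradient (f ω) θw) : ℝ) ∂μ := by
      rw [integral_inner hIg, hgradF θw, real_inner_self_eq_norm_sq]
    have h2 : ∫ ω, (inner ℝ (gradient F θw) (gradient (f ω) θw) : ℝ) ∂μ
        ≤ ∫ ω, (‖gradient F θw‖ ^ 2 / 2 + (1 / 2) * ‖gradient (f ω) θw‖ ^ 2) ∂μ := by
      refine integral_mono (hIg.const_inner _)
        ((integrable_const _).add (hI2w.const_mul _)) fun ω => ?_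
      have := real_inner_le_norm (gradient F θw) (gradient (f ω) θw)
      nlinarith [sq_nonneg (‖gradient F θw‖ - ‖gradient (f ω) θw‖)]
    have h3 : ∫ ω, (‖gradient F θw‖ ^ 2 / 2 + (1 / 2) * ‖gradient (f ω) θw‖ ^ 2) ∂μ
        = ‖gradient F θw‖ ^ 2 / 2 + (1 / 2) * ∫ ω, ‖gradient (f ω) θw‖ ^ 2 ∂μ := by
      rw [integral_add (integrable_const _) (hI2w.const_mul _), integral_const,
        integral_const_mul]
      simp
    linarith [h1.le, h1.ge, h2, h3.le, h3.ge]
  have hISw : ∫ ω, ‖gradient (f ω) θw‖ ^ 2 ∂μ ≤ 2 * ℒ * (F θw - F θstar) := by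
    simpa [hinterp] using hES θw
  have hμℒ : μc ≤ ℒ := by nlinarith [hPL θw, hNle, hISw, hGw]
  have hαL : α * (L * ℒ) ≤ μc := by rwa [← le_div_iff₀ (mul_pos hL hℒ)]
  have hαμ : α * μc ≤ 1 := by
    nlinarith [mul_le_mul_of_nonneg_left hαL hμc.le,
      mul_le_mul hμL hμℒ hμc.le hL.le, mul_pos hL hℒ]
  have hstep := fun θ => sgd_one_step μ f F θstar μc L ℒ α hμc hL hℒ hdF hmin hsmooth
    hPL hgradint hgradF hESint hES hinterp hα hα' θ
  -- strengthened induction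
  suffices H : ∀ t : ℕ,
      Integrable (fun ω => F (Θ t ω) - F θstar) (Measure.pi fun _ : Fin t => μ) ∧
      ∫ ω, (F (Θ t ω) - F θstar) ∂(Measure.pi fun _ : Fin t => μ)
        ≤ (1 - α * μc) ^ t * (F θ0 - F θstar) from fun t => (H t).2
  intro t
  induction t with
  | zero =>
    constructor
    · simpa [hΘ0] using (integrable_const (F θ0 - F θstar)
        (μ := Measure.pi fun _ : Fin 0 => μ))
    · simp [hΘ0]
  | succ t ih =>
    obtain ⟨IHint, IHle⟩ := ih
    set e := MeasurableEquiv.piFinSuccAbove (fun _ : Fin (t + 1) => Ω) (Fin.last t) with he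
    have mp : MeasurePreserving e (Measure.pi fun _ : Fin (t + 1) => μ)
        (μ.prod (Measure.pi fun _ : Fin t => μ)) :=
      measurePreserving_piFinSuccAbove (fun _ : Fin (t + 1) => μ) (Fin.last t)
    set K : Ω × (Fin t → Ω) → ℝ := fun p => F (Θ (t + 1) (e.symm p)) - F θstar with hK
    have hKe : ∀ ω, F (Θ (t + 1) ω) - F θstar = K (e ω) := by
      intro ω; simp [hK]
    have hKform : ∀ (a : Ω) (hist : Fin t → Ω),
        K (a, hist) = F (Θ t hist - α • gradient (f a) (Θ t hist)) - F θstar := by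
      intro a hist
      have hsymm : e.symm (a, hist) = (Fin.last t).insertNth a hist := rfl
      have hlast : (e.symm (a, hist)) (Fin.last t) = a := by
        rw [hsymm]; exact Fin.insertNth_apply_same _ _ _
      have hcast : (fun i : Fin t => (e.symm (a, hist)) i.castSucc) = hist := by
        funext j
        rw [hsymm, ← Fin.succAbove_last]
        exact Fin.insertNth_apply_succAbove _ _ _ _
      rw [hK]
      simp only
      rw [hΘstep t (e.symm (a, hist)), hlast, hcast]
    have hKnn : ∀ p, 0 ≤ K p := by
      rintro ⟨a, hist⟩
      rw [hKform]
      exact sub_nonneg.2 (hmin _)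
    have hKmeas : Measurable K :=
      ((hdF.continuous.measurable.comp
        ((hΘmeas (t + 1)).comp e.symm.measurable)).sub measurable_const)
    have hslice : ∀ hist : Fin t → Ω, Integrable (fun a => K (a, hist)) μ := by
      intro hist
      exact ((hstep (Θ t hist)).1).congr (ae_of_all _ fun a => (hKform a hist).symm)
    have hsliceval : ∀ hist : Fin t → Ω,
        ∫ a, K (a, hist) ∂μ ≤ (1 - α * μc) * (F (Θ t hist) - F θstar) := by
      intro hist
      calc ∫ a, K (a, hist) ∂μ
          = ∫ a, (F (Θ t hist - α • gradient (f a) (Θ t hist)) - F θstar) ∂μ := by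
            refine integral_congr_ae (ae_of_all _ fun a => ?_)
            exact hKform a hist
        _ ≤ (1 - α * μc) * (F (Θ t hist) - F θstar) := (hstep (Θ t hist)).2
    have hinnmeas : AEStronglyMeasurable (fun hist => ∫ a, ‖K (a, hist)‖ ∂μ)
        (Measure.pi fun _ : Fin t => μ) :=
      (hKmeas.norm.stronglyMeasurable.integral_prod_left').aestronglyMeasurable
    have hII : Integrable (fun hist => ∫ a, ‖K (a, hist)‖ ∂μ)
        (Measure.pi fun _ : Fin t => μ) := by
      refine Integrable.mono' (IHint.const_mul |1 - α * μc|) hinnmeas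
        (ae_of_all _ fun hist => ?_)
      have hnn : 0 ≤ ∫ a, ‖K (a, hist)‖ ∂μ := integral_nonneg fun a => norm_nonneg _
      rw [Real.norm_of_nonneg hnn]
      have heq : ∫ a, ‖K (a, hist)‖ ∂μ = ∫ a, K (a, hist) ∂μ :=
        integral_congr_ae (ae_of_all _ fun a => Real.norm_of_nonneg (hKnn _))
      rw [heq]
      calc ∫ a, K (a, hist) ∂μ ≤ (1 - α * μc) * (F (Θ t hist) - F θstar) := hsliceval hist
        _ ≤ |1 - α * μc| * (F (Θ t hist) - F θstar) :=
          mul_le_mul_of_nonneg_right (le_abs_self _) (sub_nonneg.2 (hmin _))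
    have hKint : Integrable K (μ.prod (Measure.pi fun _ : Fin t => μ)) := by
      rw [integrable_prod_iff' hKmeas.aestronglyMeasurable]
      exact ⟨ae_of_all _ hslice, hII⟩
    have hII' : Integrable (fun hist => ∫ a, K (a, hist) ∂μ)
        (Measure.pi fun _ : Fin t => μ) := by
      refine hII.congr (ae_of_all _ fun hist => ?_)
      exact integral_congr_ae (ae_of_all _ fun a => Real.norm_of_nonneg (hKnn _))
    have hIntSucc : Integrable (fun ω => F (Θ (t + 1) ω) - F θstar)
        (Measure.pi fun _ : Fin (t + 1) => μ) := by
      have := (mp.integrable_comp_emb e.measurableEmbedding).2 hKint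
      exact this.congr (ae_of_all _ fun ω => (hKe ω).symm)
    refine ⟨hIntSucc, ?_⟩
    have key : ∫ ω, (F (Θ (t + 1) ω) - F θstar) ∂(Measure.pi fun _ : Fin (t + 1) => μ)
        = ∫ hist, (∫ a, K (a, hist) ∂μ) ∂(Measure.pi fun _ : Fin t => μ) := by
      calc ∫ ω, (F (Θ (t + 1) ω) - F θstar) ∂(Measure.pi fun _ : Fin (t + 1) => μ)
          = ∫ ω, K (e ω) ∂(Measure.pi fun _ : Fin (t + 1) => μ) :=
            integral_congr_ae (ae_of_all _ fun ω => hKe ω)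
        _ = ∫ p, K p ∂(μ.prod (Measure.pi fun _ : Fin t => μ)) :=
            mp.integral_comp e.measurableEmbedding K
        _ = ∫ a, (∫ hist, K (a, hist) ∂(Measure.pi fun _ : Fin t => μ)) ∂μ :=
            integral_prod K hKint
        _ = ∫ hist, (∫ a, K (a, hist) ∂μ) ∂(Measure.pi fun _ : Fin t => μ) :=
            integral_integral_swap hKint
    rw [key]
    calc ∫ hist, (∫ a, K (a, hist) ∂μ) ∂(Measure.pi fun _ : Fin t => μ)
        ≤ ∫ hist, ((1 - α * μc) * (F (Θ t hist) - F θstar))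
            ∂(Measure.pi fun _ : Fin t => μ) :=
          integral_mono hII' (IHint.const_mul _) hsliceval
      _ = (1 - α * μc) * ∫ hist, (F (Θ t hist) - F θstar)
            ∂(Measure.pi fun _ : Fin t => μ) := integral_const_mul _ _
      _ ≤ (1 - α * μc) * ((1 - α * μc) ^ t * (F θ0 - F θstar)) :=
          mul_le_mul_of_nonneg_left IHle (by linarith)
      _ = (1 - α * μc) ^ (t + 1) * (F θ0 - F θstar) := by ring
end

section
/- (SGD convergence with gradient noise, parameter form.) Let f(θ) = E_ξ[f_ξ(θ)] be μ-strongly quasi-convex with minimizer θ*, satisfy expected smoothness with constant ℒ, and define the gradient noise σ² = E_ξ[‖∇f_ξ(θ*)‖²]. Then SGD with step-size 0 < α ≤ 1/(2ℒ) satisfies E[‖θ^t − θ*‖²] ≤ (1 − αμ)^t ‖θ^0 − θ*‖² + (2α/μ)σ². -/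
open MeasureTheory ENNReal
set_option maxHeartbeats 1600000

lemma jensen_sq' {Ω : Type*} [MeasurableSpace Ω] (μ : Measure Ω) [IsProbabilityMeasure μ]
    (X : Ω → ℝ) (hX : Integrable X μ) (hX2 : Integrable (fun ω => X ω ^ 2) μ) :
    (∫ ω, X ω ∂μ) ^ 2 ≤ ∫ ω, X ω ^ 2 ∂μ := by
  set c := ∫ ω, X ω ∂μ with hc
  have h0 : 0 ≤ ∫ ω, (X ω - c) ^ 2 ∂μ := integral_nonneg fun ω => sq_nonneg _
  have h1 : Integrable (fun ω => X ω ^ 2 - 2 * c * X ω) μ := hX2.sub (hX.const_mul _)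
  have hexp : ∫ ω, (X ω - c) ^ 2 ∂μ = (∫ ω, X ω ^ 2 ∂μ) - 2 * c * c + c ^ 2 := by
    have hpt : ∀ ω, (X ω - c) ^ 2 = (X ω ^ 2 - 2 * c * X ω) + c ^ 2 := fun ω => by ring
    calc ∫ ω, (X ω - c) ^ 2 ∂μ
        = ∫ ω, ((X ω ^ 2 - 2 * c * X ω) + c ^ 2) ∂μ := by simp_rw [hpt]
      _ = (∫ ω, (X ω ^ 2 - 2 * c * X ω) ∂μ) + ∫ _ω, (c ^ 2 : ℝ) ∂μ :=
          integral_add h1 (integrable_const _)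
      _ = ((∫ ω, X ω ^ 2 ∂μ) - ∫ ω, 2 * c * X ω ∂μ) + c ^ 2 := by
          rw [integral_sub hX2 (hX.const_mul _), integral_const, probReal_univ, one_smul]
      _ = (∫ ω, X ω ^ 2 ∂μ) - 2 * c * c + c ^ 2 := by rw [MeasureTheory.integral_const_mul, ← hc]
  nlinarith [h0, hexp]

/-- SGD convergence with gradient noise (parameter form): with strong quasi-convexity
and expected smoothness, SGD with step-size `α ≤ 1/(2ℒ)` converges linearly up to a
neighborhood `(2α/μ)σ²` determined by the gradient noise at the optimum. -/
theorem sgd_noise_param {d : ℕ} {Ω : Type*} [MeasurableSpace Ω]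
    (μ : Measure Ω) [IsProbabilityMeasure μ]
    (f : Ω → EuclideanSpace ℝ (Fin d) → ℝ)
    (F : EuclideanSpace ℝ (Fin d) → ℝ)
    (hF : ∀ θ, F θ = ∫ ω, f ω θ ∂μ)
    (θstar : EuclideanSpace ℝ (Fin d))
    (μc ℒ α σ2 : ℝ) (hμc : 0 < μc) (hℒ : 0 < ℒ)
    (hdiff : ∀ ω, Differentiable ℝ (f ω)) (hdF : Differentiable ℝ F)
    (hmin : ∀ θ, F θstar ≤ F θ)
    (hsqc : ∀ θ, F θ + (inner ℝ (gradient F θ) (θstar - θ) : ℝ)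
      + μc / 2 * ‖θstar - θ‖ ^ 2 ≤ F θstar)
    (hgradint : ∀ θ, Integrable (fun ω => gradient (f ω) θ) μ)
    (hgradF : ∀ θ, ∫ ω, gradient (f ω) θ ∂μ = gradient F θ)
    (hESint : ∀ θ, Integrable (fun ω => ‖gradient (f ω) θ - gradient (f ω) θstar‖ ^ 2) μ)
    (hES : ∀ θ, ∫ ω, ‖gradient (f ω) θ - gradient (f ω) θstar‖ ^ 2 ∂μ
      ≤ 2 * ℒ * (F θ - F θstar))
    (hσint : Integrable (fun ω => ‖gradient (f ω) θstar‖ ^ 2) μ)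
    (hσ : σ2 = ∫ ω, ‖gradient (f ω) θstar‖ ^ 2 ∂μ)
    (hα : 0 < α) (hα' : α ≤ 1 / (2 * ℒ))
    (θ0 : EuclideanSpace ℝ (Fin d))
    (Θ : (t : ℕ) → (Fin t → Ω) → EuclideanSpace ℝ (Fin d))
    (hΘ0 : ∀ ω, Θ 0 ω = θ0)
    (hΘstep : ∀ t (ω : Fin (t + 1) → Ω),
      Θ (t + 1) ω = Θ t (fun i => ω i.castSucc)
        - α • gradient (f (ω (Fin.last t))) (Θ t (fun i => ω i.castSucc)))
    (hΘmeas : ∀ t, Measurable (Θ t)) :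
    ∀ t, ∫ ω, ‖Θ t ω - θstar‖ ^ 2 ∂(Measure.pi fun _ : Fin t => μ)
      ≤ (1 - α * μc) ^ t * ‖θ0 - θstar‖ ^ 2 + (2 * α / μc) * σ2 := by
  have hσ2 : 0 ≤ σ2 := hσ ▸ integral_nonneg fun ω => by positivity
  rcases Nat.eq_zero_or_pos d with hd | hd
  · -- trivial case `d = 0`
    subst hd
    have hsub : ∀ x y : EuclideanSpace ℝ (Fin 0), x = y := fun x y =>
      PiLp.ext fun i => i.elim0
    intro t
    have h1 : ∀ ω : Fin t → Ω, ‖Θ t ω - θstar‖ ^ 2 = 0 := by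
      intro ω; rw [hsub (Θ t ω) θstar, sub_self, norm_zero]; ring
    have h2 : ‖θ0 - θstar‖ ^ 2 = 0 := by
      rw [hsub θ0 θstar, sub_self, norm_zero]; ring
    simp only [h1, integral_zero, h2, mul_zero, zero_add]
    positivity
  -- main case `1 ≤ d`
  have h2αℒ : α * (2 * ℒ) ≤ 1 := by
    rw [le_div_iff₀ (by positivity)] at hα'; linarith
  -- the gradient of `F` vanishes at the minimizer
  have hgrad0 : gradient F θstar = 0 := by
    have hloc : IsLocalMin F θstar := Filter.Eventually.of_forall hmin
    rw [gradient, hloc.fderiv_eq_zero, map_zero]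
  -- strong quasi-convexity, rearranged
  have hsqc' : ∀ θ, F θ - F θstar + μc / 2 * ‖θ - θstar‖ ^ 2
      ≤ (inner ℝ (gradient F θ) (θ - θstar) : ℝ) := by
    intro θ
    have h := hsqc θ
    have h1 : (inner ℝ (gradient F θ) (θstar - θ) : ℝ)
        = -(inner ℝ (gradient F θ) (θ - θstar) : ℝ) := by
      rw [← neg_sub θ θstar, inner_neg_right]
    have h2 : ‖θstar - θ‖ = ‖θ - θstar‖ := norm_sub_rev _ _
    rw [h1, h2] at h; linarith
  -- Jensen: `‖∇F θ‖² ≤ 2ℒ (F θ - F θ*)`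
  have hgradFsq : ∀ θ, ‖gradient F θ‖ ^ 2 ≤ 2 * ℒ * (F θ - F θstar) := by
    intro θ
    set G := fun ω => gradient (f ω) θ - gradient (f ω) θstar with hG
    have hGint : Integrable G μ := (hgradint θ).sub (hgradint θstar)
    have hintG : ∫ ω, G ω ∂μ = gradient F θ := by
      rw [hG, integral_sub (hgradint θ) (hgradint θstar), hgradF, hgradF, hgrad0, sub_zero]
    have hnormle : ‖gradient F θ‖ ≤ ∫ ω, ‖G ω‖ ∂μ := by
      rw [← hintG]; exact norm_integral_le_integral_norm _
    have hjen : (∫ ω, ‖G ω‖ ∂μ) ^ 2 ≤ ∫ ω, ‖G ω‖ ^ 2 ∂μ :=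
      jensen_sq' μ _ hGint.norm (hESint θ)
    have h1 : ‖gradient F θ‖ ^ 2 ≤ (∫ ω, ‖G ω‖ ∂μ) ^ 2 := by
      have h0 : (0:ℝ) ≤ ∫ ω, ‖G ω‖ ∂μ := integral_nonneg fun ω => norm_nonneg _
      nlinarith [norm_nonneg (gradient F θ)]
    exact le_trans (le_trans h1 hjen) (hES θ)
  -- derive `μc ≤ 2ℒ` by probing a unit vector
  have hμℒ : α * μc ≤ 1 := by
    set u : EuclideanSpace ℝ (Fin d) := EuclideanSpace.single (⟨0, hd⟩ : Fin d) (1:ℝ) with hu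
    set θ := θstar + u with hθ
    have hnorm : ‖θ - θstar‖ = 1 := by
      rw [hθ, add_sub_cancel_left, hu, EuclideanSpace.norm_single, norm_one]
    set D := F θ - F θstar with hD
    have hD0 : 0 ≤ D := sub_nonneg.mpr (hmin θ)
    have h1 : D + μc / 2 ≤ (inner ℝ (gradient F θ) (θ - θstar) : ℝ) := by
      have := hsqc' θ; rw [hnorm] at this; linarith
    have h2 : (inner ℝ (gradient F θ) (θ - θstar) : ℝ) ≤ ‖gradient F θ‖ := by
      have := real_inner_le_norm (gradient F θ) (θ - θstar)
      rw [hnorm, mul_one] at this; exact this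
    have h3 : (D + μc / 2) ^ 2 ≤ 2 * ℒ * D := by
      have h4 := hgradFsq θ
      nlinarith [hgradFsq θ, hD0, hμc]
    have hμ2ℒ : μc ≤ 2 * ℒ := by nlinarith [hμc, hℒ, hD0]
    calc α * μc ≤ α * (2 * ℒ) := by nlinarith [hα]
      _ ≤ 1 := h2αℒ
  have h1αμ : 0 ≤ 1 - α * μc := by linarith
  -- one-sample step inequality
  have onestep : ∀ θ : EuclideanSpace ℝ (Fin d),
      ∫⁻ ω, ENNReal.ofReal (‖(θ - θstar) - α • gradient (f ω) θ‖ ^ 2) ∂μ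
        ≤ ENNReal.ofReal ((1 - α * μc) * ‖θ - θstar‖ ^ 2 + 2 * α ^ 2 * σ2) := by
    intro θ
    set g := fun ω => gradient (f ω) θ with hg
    set a := θ - θstar with ha
    have hgint : Integrable g μ := hgradint θ
    -- integrability of ‖g‖²
    have hg2int : Integrable (fun ω => ‖g ω‖ ^ 2) μ := by
      have hb : Integrable (fun ω =>
          2 * ‖g ω - gradient (f ω) θstar‖ ^ 2 + 2 * ‖gradient (f ω) θstar‖ ^ 2) μ :=
        ((hESint θ).const_mul 2).add (hσint.const_mul 2)
      refine Integrable.mono' hb ?_ ?_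
      · exact (continuous_pow 2).comp_aestronglyMeasurable hgint.aestronglyMeasurable.norm
      · filter_upwards with ω
        rw [Real.norm_eq_abs, abs_of_nonneg (by positivity)]
        have htri : ‖g ω‖ ≤ ‖g ω - gradient (f ω) θstar‖ + ‖gradient (f ω) θstar‖ := by
          calc ‖g ω‖ = ‖(g ω - gradient (f ω) θstar) + gradient (f ω) θstar‖ := by
                rw [sub_add_cancel]
            _ ≤ _ := norm_add_le _ _
        nlinarith [sq_nonneg (‖g ω - gradient (f ω) θstar‖ - ‖gradient (f ω) θstar‖),
          norm_nonneg (g ω), norm_nonneg (g ω - gradient (f ω) θstar),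
          norm_nonneg (gradient (f ω) θstar)]
    -- pointwise expansion
    have hpt : ∀ ω, ‖a - α • g ω‖ ^ 2
        = (‖a‖ ^ 2 - 2 * α * (inner ℝ a (g ω) : ℝ)) + α ^ 2 * ‖g ω‖ ^ 2 := by
      intro ω
      rw [norm_sub_sq_real, real_inner_smul_right, norm_smul, Real.norm_eq_abs, mul_pow, sq_abs]
      ring
    have hinnerint : Integrable (fun ω => (inner ℝ a (g ω) : ℝ)) μ := hgint.const_inner a
    have h1int : Integrable (fun ω => ‖a‖ ^ 2 - 2 * α * (inner ℝ a (g ω) : ℝ)) μ :=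
      (integrable_const _).sub (hinnerint.const_mul _)
    have hφint : Integrable (fun ω => ‖a - α • g ω‖ ^ 2) μ := by
      have := h1int.add (hg2int.const_mul (α ^ 2))
      refine this.congr ?_
      filter_upwards with ω
      exact (hpt ω).symm
    -- value of the integral
    have hval : ∫ ω, ‖a - α • g ω‖ ^ 2 ∂μ
        = ‖a‖ ^ 2 - 2 * α * (inner ℝ a (gradient F θ) : ℝ) + α ^ 2 * ∫ ω, ‖g ω‖ ^ 2 ∂μ := by
      calc ∫ ω, ‖a - α • g ω‖ ^ 2 ∂μ
          = ∫ ω, ((‖a‖ ^ 2 - 2 * α * (inner ℝ a (g ω) : ℝ)) + α ^ 2 * ‖g ω‖ ^ 2) ∂μ := by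
            simp_rw [hpt]
        _ = (∫ ω, (‖a‖ ^ 2 - 2 * α * (inner ℝ a (g ω) : ℝ)) ∂μ)
              + ∫ ω, α ^ 2 * ‖g ω‖ ^ 2 ∂μ :=
            integral_add h1int (hg2int.const_mul _)
        _ = ‖a‖ ^ 2 - 2 * α * (inner ℝ a (gradient F θ) : ℝ) + α ^ 2 * ∫ ω, ‖g ω‖ ^ 2 ∂μ := by
            rw [integral_sub (integrable_const _) (hinnerint.const_mul _),
              MeasureTheory.integral_const_mul, MeasureTheory.integral_const_mul,
              integral_const, probReal_univ, one_smul,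
              integral_inner hgint, hgradF]
    -- bounds
    have hip : F θ - F θstar + μc / 2 * ‖a‖ ^ 2 ≤ (inner ℝ a (gradient F θ) : ℝ) := by
      rw [real_inner_comm]; exact hsqc' θ
    have hS : ∫ ω, ‖g ω‖ ^ 2 ∂μ ≤ 4 * ℒ * (F θ - F θstar) + 2 * σ2 := by
      have hmono : ∫ ω, ‖g ω‖ ^ 2 ∂μ ≤ ∫ ω, (2 * ‖g ω - gradient (f ω) θstar‖ ^ 2
          + 2 * ‖gradient (f ω) θstar‖ ^ 2) ∂μ := by
        refine integral_mono hg2int (((hESint θ).const_mul 2).add (hσint.const_mul 2)) ?_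
        intro ω
        have htri : ‖g ω‖ ≤ ‖g ω - gradient (f ω) θstar‖ + ‖gradient (f ω) θstar‖ := by
          calc ‖g ω‖ = ‖(g ω - gradient (f ω) θstar) + gradient (f ω) θstar‖ := by
                rw [sub_add_cancel]
            _ ≤ _ := norm_add_le _ _
        simp only
        nlinarith [sq_nonneg (‖g ω - gradient (f ω) θstar‖ - ‖gradient (f ω) θstar‖),
          norm_nonneg (g ω), norm_nonneg (g ω - gradient (f ω) θstar),
          norm_nonneg (gradient (f ω) θstar)]
      have hsplit : ∫ ω, (2 * ‖g ω - gradient (f ω) θstar‖ ^ 2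
          + 2 * ‖gradient (f ω) θstar‖ ^ 2) ∂μ
          = 2 * (∫ ω, ‖g ω - gradient (f ω) θstar‖ ^ 2 ∂μ) + 2 * σ2 := by
        rw [integral_add ((hESint θ).const_mul 2) (hσint.const_mul 2),
          MeasureTheory.integral_const_mul, MeasureTheory.integral_const_mul, hσ]
      have := hES θ
      rw [hsplit] at hmono
      linarith
    have hDθ : 0 ≤ F θ - F θstar := sub_nonneg.mpr (hmin θ)
    have hbound : ∫ ω, ‖a - α • g ω‖ ^ 2 ∂μ
        ≤ (1 - α * μc) * ‖a‖ ^ 2 + 2 * α ^ 2 * σ2 := by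
      rw [hval]
      nlinarith [hip, hS, hDθ, hα, h2αℒ, mul_nonneg hα.le hDθ, sq_nonneg α,
        mul_nonneg (mul_nonneg hα.le hα.le) hDθ]
    rw [← ofReal_integral_eq_lintegral_ofReal hφint
      (Filter.Eventually.of_forall fun ω => sq_nonneg _)]
    exact ENNReal.ofReal_le_ofReal hbound
  -- the induction in `ℝ≥0∞`
  have hmeasR : ∀ t, Measurable (fun ω : Fin t → Ω =>
      ENNReal.ofReal (‖Θ t ω - θstar‖ ^ 2)) := by
    intro t
    exact ENNReal.measurable_ofReal.comp
      ((((hΘmeas t).sub measurable_const).norm).pow_const 2)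
  have main : ∀ t, ∫⁻ ω, ENNReal.ofReal (‖Θ t ω - θstar‖ ^ 2)
      ∂(Measure.pi fun _ : Fin t => μ)
      ≤ ENNReal.ofReal ((1 - α * μc) ^ t * ‖θ0 - θstar‖ ^ 2 + (2 * α / μc) * σ2) := by
    intro t
    induction t with
    | zero =>
      simp only [hΘ0, lintegral_const, measure_univ, mul_one, pow_zero, one_mul]
      refine ENNReal.ofReal_le_ofReal ?_
      have : 0 ≤ (2 * α / μc) * σ2 := by positivity
      linarith
    | succ t ih =>
      have key : ∫⁻ ω, ENNReal.ofReal (‖Θ (t+1) ω - θstar‖ ^ 2)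
          ∂(Measure.pi fun _ : Fin (t+1) => μ)
          = ∫⁻ y, ∫⁻ x, ENNReal.ofReal
              (‖(Θ t y - θstar) - α • gradient (f x) (Θ t y)‖ ^ 2) ∂μ
            ∂(Measure.pi fun _ : Fin t => μ) := by
        have hmp := (measurePreserving_piFinSuccAbove (fun _ : Fin (t+1) => μ) (Fin.last t)).symm
        have hm : AEMeasurable (fun p : Ω × (Fin t → Ω) =>
            ENNReal.ofReal (‖Θ (t+1) ((MeasurableEquiv.piFinSuccAbove
              (fun _ : Fin (t+1) => Ω) (Fin.last t)).symm p) - θstar‖ ^ 2))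
            (μ.prod (Measure.pi fun _ : Fin t => μ)) :=
          ((hmeasR (t+1)).comp (MeasurableEquiv.measurable _)).aemeasurable
        rw [← hmp.map_eq, lintegral_map (hmeasR (t+1)) (MeasurableEquiv.measurable _),
          lintegral_prod_symm _ hm]
        refine lintegral_congr fun y => lintegral_congr fun x => ?_
        congr 1
        simp_rw [MeasurableEquiv.piFinSuccAbove_symm_apply, Fin.insertNthEquiv, Equiv.coe_fn_mk]
        rw [hΘstep t]
        have hy : (fun i : Fin t => Fin.insertNth (α := fun _ : Fin (t+1) => Ω) (Fin.last t) x y i.castSucc) = y := by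
          funext i
          have h := Fin.insertNth_apply_succAbove (α := fun _ : Fin (t+1) => Ω) (Fin.last t) x y i
          rwa [Fin.succAbove_last_apply] at h
        rw [Fin.insertNth_apply_same, hy, sub_right_comm]
      rw [key]
      have hb : ∀ y : Fin t → Ω, ∫⁻ x, ENNReal.ofReal
          (‖(Θ t y - θstar) - α • gradient (f x) (Θ t y)‖ ^ 2) ∂μ
          ≤ ENNReal.ofReal ((1 - α * μc) * ‖Θ t y - θstar‖ ^ 2 + 2 * α ^ 2 * σ2) :=
        fun y => onestep (Θ t y)
      calc ∫⁻ y, ∫⁻ x, ENNReal.ofReal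
              (‖(Θ t y - θstar) - α • gradient (f x) (Θ t y)‖ ^ 2) ∂μ
            ∂(Measure.pi fun _ : Fin t => μ)
          ≤ ∫⁻ y, ENNReal.ofReal ((1 - α * μc) * ‖Θ t y - θstar‖ ^ 2 + 2 * α ^ 2 * σ2)
            ∂(Measure.pi fun _ : Fin t => μ) := lintegral_mono hb
        _ = ∫⁻ y, (ENNReal.ofReal (1 - α * μc) * ENNReal.ofReal (‖Θ t y - θstar‖ ^ 2)
              + ENNReal.ofReal (2 * α ^ 2 * σ2)) ∂(Measure.pi fun _ : Fin t => μ) := by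
            refine lintegral_congr fun y => ?_
            rw [ENNReal.ofReal_add (by positivity) (by positivity), ENNReal.ofReal_mul h1αμ]
        _ = ENNReal.ofReal (1 - α * μc) * (∫⁻ y, ENNReal.ofReal (‖Θ t y - θstar‖ ^ 2)
              ∂(Measure.pi fun _ : Fin t => μ)) + ENNReal.ofReal (2 * α ^ 2 * σ2) := by
            rw [lintegral_add_right _ measurable_const, lintegral_const, measure_univ, mul_one,
              lintegral_const_mul _ (hmeasR t)]
        _ ≤ ENNReal.ofReal (1 - α * μc)
              * ENNReal.ofReal ((1 - α * μc) ^ t * ‖θ0 - θstar‖ ^ 2 + (2 * α / μc) * σ2)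
              + ENNReal.ofReal (2 * α ^ 2 * σ2) := by
            gcongr
        _ = ENNReal.ofReal ((1 - α * μc)
              * ((1 - α * μc) ^ t * ‖θ0 - θstar‖ ^ 2 + (2 * α / μc) * σ2)
              + 2 * α ^ 2 * σ2) := by
            rw [← ENNReal.ofReal_mul h1αμ,
              ← ENNReal.ofReal_add (mul_nonneg h1αμ (by positivity)) (by positivity)]
        _ = ENNReal.ofReal ((1 - α * μc) ^ (t+1) * ‖θ0 - θstar‖ ^ 2 + (2 * α / μc) * σ2) := by
            congr 1
            field_simp
            ring
  -- conclude: convert back to a Bochner integral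
  intro t
  have hB : 0 ≤ (1 - α * μc) ^ t * ‖θ0 - θstar‖ ^ 2 + (2 * α / μc) * σ2 := by positivity
  rw [integral_eq_lintegral_of_nonneg_ae (f := fun ω : Fin t → Ω => ‖Θ t ω - θstar‖ ^ 2)
    (Filter.Eventually.of_forall fun ω => sq_nonneg _)
    (((((hΘmeas t).sub measurable_const).norm).pow_const 2).aestronglyMeasurable)]
  calc (∫⁻ ω, ENNReal.ofReal (‖Θ t ω - θstar‖ ^ 2)
        ∂(Measure.pi fun _ : Fin t => μ)).toReal
      ≤ (ENNReal.ofReal ((1 - α * μc) ^ t * ‖θ0 - θstar‖ ^ 2 + (2 * α / μc) * σ2)).toReal :=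
        ENNReal.toReal_mono ENNReal.ofReal_ne_top (main t)
    _ = (1 - α * μc) ^ t * ‖θ0 - θstar‖ ^ 2 + (2 * α / μc) * σ2 :=
        ENNReal.toReal_ofReal hB
end

section
/- (SGD convergence with gradient noise, function-value form.) Let f(θ) = E_ξ[f_ξ(θ)] be L-smooth, satisfy the PL condition with parameter μ, satisfy expected smoothness with constant ℒ, and have gradient noise σ² = E_ξ[‖∇f_ξ(θ*)‖²] at a minimizer θ*. Then SGD with step-size 0 < α ≤ μ/(2Lℒ) satisfies E[f(θ^t) − f*] ≤ (1 − αμ)^t (f(θ^0) − f*) + (Lα/μ)σ². -/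
open MeasureTheory
open scoped RealInnerProductSpace

section SGDAux

variable {d : ℕ} {Ω : Type*} [MeasurableSpace Ω]

private lemma sgd_grad_fderiv (F : EuclideanSpace ℝ (Fin d) → ℝ)
    (hdF : Differentiable ℝ F) (p v : EuclideanSpace ℝ (Fin d)) :
    fderiv ℝ F p v = ⟪gradient F p, v⟫ := by
  have h := (hdF p).hasGradientAt
  rw [hasGradientAt_iff_hasFDerivAt] at h
  rw [h.fderiv, InnerProductSpace.toDual_apply_apply]

private lemma sgd_line_hasDerivAt (F : EuclideanSpace ℝ (Fin d) → ℝ)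
    (hdF : Differentiable ℝ F) (x v : EuclideanSpace ℝ (Fin d)) (t : ℝ) :
    HasDerivAt (fun s : ℝ => F (x + s • v)) ⟪gradient F (x + t • v), v⟫ t := by
  have hline : HasDerivAt (fun s : ℝ => x + s • v) v t := by
    simpa using ((hasDerivAt_id t).smul_const v).const_add x
  have := (hdF (x + t • v)).hasFDerivAt.comp_hasDerivAt t hline
  rw [← sgd_grad_fderiv F hdF]; exact this

private lemma sgd_descent (F : EuclideanSpace ℝ (Fin d) → ℝ) (L : ℝ)
    (hdF : Differentiable ℝ F)
    (hs : ∀ θ₁ θ₂ : EuclideanSpace ℝ (Fin d),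
      ‖gradient F θ₁ - gradient F θ₂‖ ≤ L * ‖θ₁ - θ₂‖)
    (x v : EuclideanSpace ℝ (Fin d)) :
    F (x + v) ≤ F x + ⟪gradient F x, v⟫ + L / 2 * ‖v‖ ^ 2 := by
  set c := ⟪gradient F x, v⟫ with hc
  set ψ : ℝ → ℝ := fun t => F (x + t • v) - t * c - L * t ^ 2 / 2 * ‖v‖ ^ 2 with hψ
  have hd : ∀ t : ℝ, HasDerivAt ψ
      (⟪gradient F (x + t • v), v⟫ - c - L * t * ‖v‖ ^ 2) t := by
    intro t
    have h1 := sgd_line_hasDerivAt F hdF x v t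
    have h2 : HasDerivAt (fun s : ℝ => s * c) c t := by
      simpa using (hasDerivAt_id t).mul_const c
    have h3 : HasDerivAt (fun s : ℝ => L * s ^ 2 / 2 * ‖v‖ ^ 2) (L * t * ‖v‖ ^ 2) t := by
      have h4 : HasDerivAt (fun s : ℝ => s ^ 2) (2 * t) t := by
        simpa using hasDerivAt_pow 2 t
      have h5 := ((h4.const_mul L).div_const 2).mul_const (‖v‖ ^ 2)
      rwa [show L * (2 * t) / 2 * ‖v‖ ^ 2 = L * t * ‖v‖ ^ 2 by ring] at h5
    exact (h1.sub h2).sub h3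
  have hanti : AntitoneOn ψ (Set.Icc (0:ℝ) 1) := by
    apply antitoneOn_of_deriv_nonpos (convex_Icc 0 1)
    · exact Continuous.continuousOn
        (continuous_iff_continuousAt.2 fun s => (hd s).continuousAt)
    · intro t ht
      exact (hd t).differentiableAt.differentiableWithinAt
    · intro t ht
      rw [interior_Icc, Set.mem_Ioo] at ht
      rw [(hd t).deriv]
      have hinner : ⟪gradient F (x + t • v) - gradient F x, v⟫ ≤ L * t * ‖v‖ ^ 2 := by
        calc ⟪gradient F (x + t • v) - gradient F x, v⟫
            ≤ ‖gradient F (x + t • v) - gradient F x‖ * ‖v‖ := real_inner_le_norm _ _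
          _ ≤ (L * ‖(x + t • v) - x‖) * ‖v‖ := by
              have := hs (x + t • v) x
              have hv : (0:ℝ) ≤ ‖v‖ := norm_nonneg v
              nlinarith [norm_nonneg (gradient F (x + t • v) - gradient F x)]
          _ = L * t * ‖v‖ ^ 2 := by
              rw [add_sub_cancel_left, norm_smul]
              simp [abs_of_pos ht.1]; ring
      rw [inner_sub_left] at hinner
      linarith
  have h01 := hanti (Set.mem_Icc.2 ⟨le_refl 0, zero_le_one⟩)
    (Set.mem_Icc.2 ⟨zero_le_one, le_refl 1⟩) zero_le_one
  simp only [hψ, one_smul, zero_smul, add_zero, one_pow, zero_pow, one_mul, mul_zero,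
    zero_mul, sub_zero, mul_one] at h01
  have : L * 1 / 2 = L / 2 := by ring
  linarith [h01]

private lemma sgd_grad_min_zero (F : EuclideanSpace ℝ (Fin d) → ℝ)
    (θstar : EuclideanSpace ℝ (Fin d))
    (hmin : ∀ θ, F θstar ≤ F θ) : gradient F θstar = 0 := by
  have h : IsLocalMin F θstar := Filter.Eventually.of_forall hmin
  have h2 : fderiv ℝ F θstar = 0 := h.fderiv_eq_zero
  rw [gradient, h2, map_zero]

private lemma sgd_norm_sq_integral_le (μ : Measure Ω)
    [IsProbabilityMeasure μ] (h : Ω → EuclideanSpace ℝ (Fin d)) (hint : Integrable h μ)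
    (hint2 : Integrable (fun ω => ‖h ω‖ ^ 2) μ) :
    ‖∫ ω, h ω ∂μ‖ ^ 2 ≤ ∫ ω, ‖h ω‖ ^ 2 ∂μ := by
  set c := ∫ ω, h ω ∂μ with hc
  have key : (0:ℝ) ≤ ∫ ω, ‖h ω - c‖ ^ 2 ∂μ := integral_nonneg fun ω => sq_nonneg _
  have expand : ∀ ω, ‖h ω - c‖ ^ 2 = ‖h ω‖ ^ 2 - 2 * ⟪c, h ω⟫ + ‖c‖ ^ 2 := by
    intro ω
    rw [norm_sub_sq_real, real_inner_comm]
  have hic : Integrable (fun ω => ⟪c, h ω⟫) μ := hint.const_inner c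
  have i1 : Integrable (fun ω => ‖h ω‖ ^ 2 - 2 * ⟪c, h ω⟫) μ := hint2.sub (hic.const_mul 2)
  have : ∫ ω, ‖h ω - c‖ ^ 2 ∂μ
      = (∫ ω, ‖h ω‖ ^ 2 ∂μ) - 2 * (∫ ω, ⟪c, h ω⟫ ∂μ) + ‖c‖ ^ 2 := by
    simp_rw [expand]
    rw [integral_add i1 (integrable_const _), integral_sub hint2 (hic.const_mul 2),
      integral_const, integral_const_mul]
    simp
  rw [this, integral_inner hint, ← hc, real_inner_self_eq_norm_sq] at key
  linarith

private lemma sgd_onestep (μ : Measure Ω) [IsProbabilityMeasure μ]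
    (f : Ω → EuclideanSpace ℝ (Fin d) → ℝ) (F : EuclideanSpace ℝ (Fin d) → ℝ)
    (θstar : EuclideanSpace ℝ (Fin d))
    (μc L ℒ α σ2 : ℝ) (hL : 0 < L)
    (hdF : Differentiable ℝ F)
    (hmin : ∀ θ, F θstar ≤ F θ)
    (hsmooth : ∀ θ₁ θ₂ : EuclideanSpace ℝ (Fin d),
      ‖gradient F θ₁ - gradient F θ₂‖ ≤ L * ‖θ₁ - θ₂‖)
    (hPL : ∀ θ, 2 * μc * (F θ - F θstar) ≤ ‖gradient F θ‖ ^ 2)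
    (hgradint : ∀ θ, Integrable (fun ω => gradient (f ω) θ) μ)
    (hgradF : ∀ θ, ∫ ω, gradient (f ω) θ ∂μ = gradient F θ)
    (hESint : ∀ θ, Integrable (fun ω => ‖gradient (f ω) θ - gradient (f ω) θstar‖ ^ 2) μ)
    (hES : ∀ θ, ∫ ω, ‖gradient (f ω) θ - gradient (f ω) θstar‖ ^ 2 ∂μ
      ≤ 2 * ℒ * (F θ - F θstar))
    (hσint : Integrable (fun ω => ‖gradient (f ω) θstar‖ ^ 2) μ)
    (hσ : σ2 = ∫ ω, ‖gradient (f ω) θstar‖ ^ 2 ∂μ)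
    (hα : 0 < α) (hkey : 2 * L * ℒ * α ≤ μc) (θ : EuclideanSpace ℝ (Fin d)) :
    Integrable (fun a => F (θ - α • gradient (f a) θ) - F θstar) μ ∧
    ∫ a, (F (θ - α • gradient (f a) θ) - F θstar) ∂μ
      ≤ (1 - α * μc) * (F θ - F θstar) + L * α ^ 2 * σ2 := by
  set g : Ω → EuclideanSpace ℝ (Fin d) := fun a => gradient (f a) θ with hg
  set G := gradient F θ with hG
  have hsqb : ∀ a, ‖g a‖ ^ 2 ≤ 2 * ‖g a - gradient (f a) θstar‖ ^ 2
      + 2 * ‖gradient (f a) θstar‖ ^ 2 := by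
    intro a
    have h1 : ‖g a‖ ≤ ‖g a - gradient (f a) θstar‖ + ‖gradient (f a) θstar‖ := by
      simpa using norm_add_le (g a - gradient (f a) θstar) (gradient (f a) θstar)
    have h2 : ‖g a‖ ^ 2 ≤ (‖g a - gradient (f a) θstar‖ + ‖gradient (f a) θstar‖) ^ 2 :=
      pow_le_pow_left₀ (norm_nonneg _) h1 2
    nlinarith [sq_nonneg (‖g a - gradient (f a) θstar‖ - ‖gradient (f a) θstar‖)]
  have hsqint : Integrable (fun a => ‖g a‖ ^ 2) μ := by
    have hb : Integrable (fun a => 2 * ‖g a - gradient (f a) θstar‖ ^ 2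
        + 2 * ‖gradient (f a) θstar‖ ^ 2) μ :=
      ((hESint θ).const_mul 2).add (hσint.const_mul 2)
    refine hb.mono' ?_ ?_
    · exact ((hgradint θ).aestronglyMeasurable.norm.pow 2)
    · exact Filter.Eventually.of_forall fun a => by
        rw [Real.norm_eq_abs, abs_of_nonneg (by positivity)]; exact hsqb a
  have hiinner : Integrable (fun a => ⟪G, g a⟫) μ := (hgradint θ).const_inner G
  set U : Ω → ℝ := fun a => (F θ - F θstar) - α * ⟪G, g a⟫ + L * α ^ 2 / 2 * ‖g a‖ ^ 2
    with hU
  have i2 : Integrable (fun a => (F θ - F θstar) - α * ⟪G, g a⟫) μ :=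
    (integrable_const _).sub (hiinner.const_mul α)
  have hUint : Integrable U μ := i2.add (hsqint.const_mul (L * α ^ 2 / 2))
  have hpt : ∀ a, F (θ - α • g a) - F θstar ≤ U a := by
    intro a
    have hdesc := sgd_descent F L hdF hsmooth θ (-(α • g a))
    have he : θ + -(α • g a) = θ - α • g a := by abel
    rw [he] at hdesc
    have h2 : ⟪G, -(α • g a)⟫ = -(α * ⟪G, g a⟫) := by
      rw [inner_neg_right, real_inner_smul_right]
    have h3 : ‖-(α • g a)‖ ^ 2 = α ^ 2 * ‖g a‖ ^ 2 := by
      rw [norm_neg, norm_smul, mul_pow, Real.norm_eq_abs, sq_abs]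
    rw [h2, h3] at hdesc
    simp only [hU]
    linarith
  have hint : Integrable (fun a => F (θ - α • g a) - F θstar) μ := by
    refine hUint.mono' ?_ (Filter.Eventually.of_forall fun a => ?_)
    · have hmeas : AEStronglyMeasurable (fun a => θ - α • g a) μ :=
        aestronglyMeasurable_const.sub ((hgradint θ).aestronglyMeasurable.const_smul α)
      exact (hdF.continuous.comp_aestronglyMeasurable hmeas).sub aestronglyMeasurable_const
    · rw [Real.norm_eq_abs, abs_of_nonneg (by linarith [hmin (θ - α • g a)])]
      exact hpt a
  refine ⟨hint, ?_⟩
  have hmono := integral_mono hint hUint hpt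
  have hIU : ∫ a, U a ∂μ = (F θ - F θstar) - α * ‖G‖ ^ 2
      + L * α ^ 2 / 2 * ∫ a, ‖g a‖ ^ 2 ∂μ := by
    rw [hU]
    rw [integral_add i2 (hsqint.const_mul (L * α ^ 2 / 2)),
      integral_sub (integrable_const _) (hiinner.const_mul α),
      integral_const, integral_const_mul, integral_const_mul,
      integral_inner (hgradint θ), hgradF θ, ← hG, real_inner_self_eq_norm_sq]
    simp
  have hS : ∫ a, ‖g a‖ ^ 2 ∂μ ≤ 4 * ℒ * (F θ - F θstar) + 2 * σ2 := by
    have h1 : ∫ a, ‖g a‖ ^ 2 ∂μ ≤ ∫ a, (2 * ‖g a - gradient (f a) θstar‖ ^ 2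
        + 2 * ‖gradient (f a) θstar‖ ^ 2) ∂μ :=
      integral_mono hsqint (((hESint θ).const_mul 2).add (hσint.const_mul 2)) hsqb
    rw [integral_add ((hESint θ).const_mul 2) (hσint.const_mul 2),
      integral_const_mul, integral_const_mul, ← hσ] at h1
    have h2 := hES θ
    linarith
  have hΔ : 0 ≤ F θ - F θstar := by linarith [hmin θ]
  have hPLθ := hPL θ
  have hLa : 0 ≤ L * α ^ 2 / 2 := by positivity
  calc ∫ a, (F (θ - α • g a) - F θstar) ∂μ ≤ ∫ a, U a ∂μ := hmono
    _ = (F θ - F θstar) - α * ‖G‖ ^ 2 + L * α ^ 2 / 2 * ∫ a, ‖g a‖ ^ 2 ∂μ := hIU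
    _ ≤ (F θ - F θstar) - α * ‖G‖ ^ 2
        + L * α ^ 2 / 2 * (4 * ℒ * (F θ - F θstar) + 2 * σ2) := by nlinarith
    _ ≤ (1 - α * μc) * (F θ - F θstar) + L * α ^ 2 * σ2 := by
        rw [← hG] at hPLθ
        have h1 : α * (2 * μc * (F θ - F θstar)) ≤ α * ‖G‖ ^ 2 :=
          mul_le_mul_of_nonneg_left hPLθ hα.le
        have h2 : (2 * L * ℒ * α) * (α * (F θ - F θstar)) ≤ μc * (α * (F θ - F θstar)) :=
          mul_le_mul_of_nonneg_right hkey (by positivity)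
        nlinarith

end SGDAux

/-- SGD convergence with gradient noise (function-value form): with `L`-smoothness,
the PL condition, and expected smoothness, SGD with step-size `α ≤ μ/(2Lℒ)` converges
linearly in function value up to a neighborhood `(Lα/μ)σ²`. -/
theorem sgd_noise_value {d : ℕ} {Ω : Type*} [MeasurableSpace Ω]
    (μ : Measure Ω) [IsProbabilityMeasure μ]
    (f : Ω → EuclideanSpace ℝ (Fin d) → ℝ)
    (F : EuclideanSpace ℝ (Fin d) → ℝ)
    (hF : ∀ θ, F θ = ∫ ω, f ω θ ∂μ)
    (θstar : EuclideanSpace ℝ (Fin d))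
    (μc L ℒ α σ2 : ℝ) (hμc : 0 < μc) (hL : 0 < L) (hℒ : 0 < ℒ)
    (hdiff : ∀ ω, Differentiable ℝ (f ω)) (hdF : Differentiable ℝ F)
    (hmin : ∀ θ, F θstar ≤ F θ)
    (hsmooth : ∀ θ₁ θ₂, ‖gradient F θ₁ - gradient F θ₂‖ ≤ L * ‖θ₁ - θ₂‖)
    (hPL : ∀ θ, 2 * μc * (F θ - F θstar) ≤ ‖gradient F θ‖ ^ 2)
    (hgradint : ∀ θ, Integrable (fun ω => gradient (f ω) θ) μ)
    (hgradF : ∀ θ, ∫ ω, gradient (f ω) θ ∂μ = gradient F θ)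
    (hESint : ∀ θ, Integrable (fun ω => ‖gradient (f ω) θ - gradient (f ω) θstar‖ ^ 2) μ)
    (hES : ∀ θ, ∫ ω, ‖gradient (f ω) θ - gradient (f ω) θstar‖ ^ 2 ∂μ
      ≤ 2 * ℒ * (F θ - F θstar))
    (hσint : Integrable (fun ω => ‖gradient (f ω) θstar‖ ^ 2) μ)
    (hσ : σ2 = ∫ ω, ‖gradient (f ω) θstar‖ ^ 2 ∂μ)
    (hα : 0 < α) (hα' : α ≤ μc / (2 * L * ℒ))
    (θ0 : EuclideanSpace ℝ (Fin d))
    (Θ : (t : ℕ) → (Fin t → Ω) → EuclideanSpace ℝ (Fin d))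
    (hΘ0 : ∀ ω, Θ 0 ω = θ0)
    (hΘstep : ∀ t (ω : Fin (t + 1) → Ω),
      Θ (t + 1) ω = Θ t (fun i => ω i.castSucc)
        - α • gradient (f (ω (Fin.last t))) (Θ t (fun i => ω i.castSucc)))
    (hΘmeas : ∀ t, Measurable (Θ t)) :
    ∀ t, ∫ ω, (F (Θ t ω) - F θstar) ∂(Measure.pi fun _ : Fin t => μ)
      ≤ (1 - α * μc) ^ t * (F θ0 - F θstar) + (L * α / μc) * σ2 := by
  have hσ2 : 0 ≤ σ2 := hσ ▸ integral_nonneg fun ω => sq_nonneg _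
  have hcoef : 0 ≤ L * α / μc * σ2 := mul_nonneg (by positivity) hσ2
  by_cases hconst : ∀ θ, F θ = F θstar
  · intro t
    have hz : ∀ ω : Fin t → Ω, F (Θ t ω) - F θstar = 0 := fun ω => by rw [hconst]; ring
    simp_rw [hz]
    rw [integral_zero, hconst θ0]
    simp only [sub_self, mul_zero, zero_add]
    exact hcoef
  · push_neg at hconst
    obtain ⟨θw, hθw⟩ := hconst
    have hΔw : 0 < F θw - F θstar := sub_pos.2 ((hmin θw).lt_of_ne (Ne.symm hθw))
    -- μc ≤ L
    have hgw2 : ‖gradient F θw‖ ^ 2 ≤ 2 * L * (F θw - F θstar) := by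
      have hdesc := sgd_descent F L hdF hsmooth θw (-(L⁻¹ • gradient F θw))
      have h1 : ⟪gradient F θw, -(L⁻¹ • gradient F θw)⟫
          = -(L⁻¹ * ‖gradient F θw‖ ^ 2) := by
        rw [inner_neg_right, real_inner_smul_right, real_inner_self_eq_norm_sq]
      have h2 : ‖-(L⁻¹ • gradient F θw)‖ ^ 2 = L⁻¹ ^ 2 * ‖gradient F θw‖ ^ 2 := by
        rw [norm_neg, norm_smul, mul_pow, Real.norm_eq_abs, sq_abs]
      have h3 := hmin (θw + -(L⁻¹ • gradient F θw))
      rw [h1, h2] at hdesc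
      have hLi : L * L⁻¹ = 1 := mul_inv_cancel₀ hL.ne'
      have h4 : L / 2 * (L⁻¹ ^ 2 * ‖gradient F θw‖ ^ 2) = L⁻¹ * ‖gradient F θw‖ ^ 2 / 2 := by
        field_simp
      have hstep1 : L⁻¹ * ‖gradient F θw‖ ^ 2 / 2 ≤ F θw - F θstar := by linarith
      have hstep2 : L * (L⁻¹ * ‖gradient F θw‖ ^ 2 / 2) ≤ L * (F θw - F θstar) :=
        mul_le_mul_of_nonneg_left hstep1 hL.le
      have h5 : L * (L⁻¹ * ‖gradient F θw‖ ^ 2 / 2) = (L * L⁻¹) * (‖gradient F θw‖ ^ 2 / 2) := by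
        ring
      rw [h5, hLi, one_mul] at hstep2
      linarith
    have hmuL : μc ≤ L := by nlinarith [hPL θw, hgw2, hΔw]
    -- μc ≤ ℒ
    have hgw3 : ‖gradient F θw‖ ^ 2 ≤ 2 * ℒ * (F θw - F θstar) := by
      have hz := sgd_grad_min_zero F θstar hmin
      have hint : Integrable (fun ω => gradient (f ω) θw - gradient (f ω) θstar) μ :=
        (hgradint θw).sub (hgradint θstar)
      have hj := sgd_norm_sq_integral_le μ
        (fun ω => gradient (f ω) θw - gradient (f ω) θstar) hint (hESint θw)
      have hINT : ∫ ω, (gradient (f ω) θw - gradient (f ω) θstar) ∂μ = gradient F θw := by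
        rw [integral_sub (hgradint θw) (hgradint θstar), hgradF, hgradF, hz, sub_zero]
      rw [hINT] at hj
      exact hj.trans (hES θw)
    have hmuℒ : μc ≤ ℒ := by nlinarith [hPL θw, hgw3, hΔw]
    have hkey : 2 * L * ℒ * α ≤ μc := by
      rw [le_div_iff₀ (by positivity : (0:ℝ) < 2 * L * ℒ)] at hα'
      linarith
    have hone : 0 ≤ 1 - α * μc := by
      have p1 : μc * μc ≤ L * ℒ := mul_le_mul hmuL hmuℒ hμc.le hL.le
      have p2 : (2 * L * ℒ * α) * μc ≤ μc * μc :=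
        mul_le_mul_of_nonneg_right hkey hμc.le
      nlinarith [mul_pos hL hℒ, hα, hμc]
    have hstep := fun θ => sgd_onestep μ f F θstar μc L ℒ α σ2 hL hdF hmin hsmooth hPL
      hgradint hgradF hESint hES hσint hσ hα hkey θ
    suffices main : ∀ t, Integrable (fun ω => F (Θ t ω) - F θstar)
        (Measure.pi fun _ : Fin t => μ) ∧
        ∫ ω, (F (Θ t ω) - F θstar) ∂(Measure.pi fun _ : Fin t => μ)
          ≤ (1 - α * μc) ^ t * (F θ0 - F θstar) + (L * α / μc) * σ2 by
      exact fun t => (main t).2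
    intro t
    induction t with
    | zero =>
      have hz : (fun ω : Fin 0 → Ω => F (Θ 0 ω) - F θstar)
          = fun _ => F θ0 - F θstar := funext fun ω => by rw [hΘ0]
      constructor
      · rw [hz]; exact integrable_const _
      · rw [hz, integral_const]
        simp only [measure_univ, ENNReal.toReal_one, probReal_univ, one_smul, pow_zero, one_mul]
        linarith
    | succ t ih =>
      obtain ⟨ihint, ihbound⟩ := ih
      set ν : Measure (Fin t → Ω) := Measure.pi fun _ : Fin t => μ with hν
      set e := MeasurableEquiv.piFinSuccAbove (fun _ : Fin (t+1) => Ω) (Fin.last t) with he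
      have hmp : MeasurePreserving e (Measure.pi fun _ : Fin (t+1) => μ) (μ.prod ν) :=
        measurePreserving_piFinSuccAbove (fun _ : Fin (t+1) => μ) (Fin.last t)
      set H : Ω × (Fin t → Ω) → ℝ := fun p => F (Θ (t+1) (e.symm p)) - F θstar with hH
      have hcomp : (fun ω : Fin (t+1) → Ω => F (Θ (t+1) ω) - F θstar) = H ∘ e := by
        funext ω
        simp only [hH, Function.comp_apply, e.symm_apply_apply]
      have hsymm : ∀ (a : Ω) (y : Fin t → Ω), e.symm (a, y) = Fin.snoc y a := by
        intro a y
        simp [he, MeasurableEquiv.piFinSuccAbove, Fin.snocEquiv]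
      have hHay : ∀ (a : Ω) (y : Fin t → Ω),
          H (a, y) = F (Θ t y - α • gradient (f a) (Θ t y)) - F θstar := by
        intro a y
        have e1 : (fun i : Fin t => (Fin.snoc y a : Fin (t+1) → Ω) i.castSucc) = y :=
          funext fun j => by simp
        have e2 : (Fin.snoc y a : Fin (t+1) → Ω) (Fin.last t) = a := by simp
        simp only [hH]
        rw [hsymm a y, hΘstep t, e1, e2]
      have hHmeas : Measurable H :=
        ((hdF.continuous.measurable.comp
          ((hΘmeas (t+1)).comp e.symm.measurable)).sub measurable_const)
      have hHnn : ∀ p : Ω × (Fin t → Ω), 0 ≤ H p := by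
        rintro ⟨a, y⟩
        rw [hHay a y]
        linarith [hmin (Θ t y - α • gradient (f a) (Θ t y))]
      set D : (Fin t → Ω) → ℝ :=
        fun y => (1 - α * μc) * (F (Θ t y) - F θstar) + L * α ^ 2 * σ2 with hD
      have hDint : Integrable D ν := (ihint.const_mul _).add (integrable_const _)
      have hinner_int : ∀ y, Integrable (fun a => H (a, y)) μ := by
        intro y
        have := (hstep (Θ t y)).1
        simp_rw [hHay]
        exact this
      have hinner_nonneg : ∀ y, 0 ≤ ∫ a, H (a, y) ∂μ :=
        fun y => integral_nonneg fun a => hHnn (a, y)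
      have hinner_le : ∀ y, ∫ a, H (a, y) ∂μ ≤ D y := by
        intro y
        have := (hstep (Θ t y)).2
        simp_rw [hHay]
        exact this
      have hHprod : Integrable H (μ.prod ν) := by
        refine ⟨hHmeas.aestronglyMeasurable, ?_⟩
        rw [hasFiniteIntegral_iff_norm]
        have hmeasH : Measurable fun p : Ω × (Fin t → Ω) => ENNReal.ofReal ‖H p‖ :=
          ENNReal.measurable_ofReal.comp hHmeas.norm
        rw [lintegral_prod_symm' (fun p => ENNReal.ofReal ‖H p‖) hmeasH]
        have hDfin := hDint.hasFiniteIntegral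
        rw [hasFiniteIntegral_iff_norm] at hDfin
        calc ∫⁻ y, ∫⁻ a, ENNReal.ofReal ‖H (a, y)‖ ∂μ ∂ν
            ≤ ∫⁻ y, ENNReal.ofReal ‖D y‖ ∂ν := by
              apply lintegral_mono
              intro y
              dsimp only
              rw [← ofReal_integral_eq_lintegral_ofReal (hinner_int y).norm
                (Filter.Eventually.of_forall fun a => norm_nonneg _)]
              apply ENNReal.ofReal_le_ofReal
              have hnn : ∀ a, ‖H (a, y)‖ = H (a, y) :=
                fun a => by rw [Real.norm_eq_abs, abs_of_nonneg (hHnn (a, y))]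
              calc ∫ a, ‖H (a, y)‖ ∂μ = ∫ a, H (a, y) ∂μ := by simp_rw [hnn]
                _ ≤ D y := hinner_le y
                _ ≤ ‖D y‖ := le_abs_self _
          _ < ⊤ := hDfin
      have hint1 : Integrable (fun ω => F (Θ (t+1) ω) - F θstar)
          (Measure.pi fun _ : Fin (t+1) => μ) := by
        rw [hcomp]
        exact (hmp.integrable_comp_emb e.measurableEmbedding).2 hHprod
      refine ⟨hint1, ?_⟩
      have hμcne : μc ≠ 0 := hμc.ne'
      calc ∫ ω, (F (Θ (t+1) ω) - F θstar) ∂(Measure.pi fun _ : Fin (t+1) => μ)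
          = ∫ p, H p ∂(μ.prod ν) := by
            rw [hcomp]
            exact hmp.integral_comp e.measurableEmbedding H
        _ = ∫ y, ∫ a, H (a, y) ∂μ ∂ν := integral_prod_symm H hHprod
        _ ≤ ∫ y, D y ∂ν :=
            integral_mono_of_nonneg (Filter.Eventually.of_forall hinner_nonneg) hDint
              (Filter.Eventually.of_forall hinner_le)
        _ = (1 - α * μc) * (∫ y, (F (Θ t y) - F θstar) ∂ν) + L * α ^ 2 * σ2 := by
            rw [hD, integral_add (ihint.const_mul _) (integrable_const _),
              integral_const, integral_const_mul]
            simp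
        _ ≤ (1 - α * μc) * ((1 - α * μc) ^ t * (F θ0 - F θstar) + (L * α / μc) * σ2)
            + L * α ^ 2 * σ2 := by
            have := mul_le_mul_of_nonneg_left ihbound hone
            linarith
        _ = (1 - α * μc) ^ (t + 1) * (F θ0 - F θstar) + (L * α / μc) * σ2 := by
            field_simp
            ring
end

section
/- (One-step SGD descent inequality under interpolation.) Suppose f is μ-strongly quasi-convex with minimizer θ*, the stochastic gradients satisfy E_ξ[∇f_ξ(θ)] = ∇f(θ), ∇f_ξ(θ*) = 0 for all ξ, and expected smoothness E_ξ[‖∇f_ξ(θ) − ∇f_ξ(θ*)‖²] ≤ 2ℒ(f(θ) − f(θ*)) holds. Then for any θ and step-size 0 < α ≤ 1/ℒ, the SGD update θ⁺ = θ − α∇f_ξ(θ) satisfies E_ξ[‖θ⁺ − θ*‖²] ≤ (1 − αμ)‖θ − θ*‖². -/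
open MeasureTheory

/-- One-step SGD descent inequality under interpolation: with strong quasi-convexity,
unbiased stochastic gradients, expected smoothness, and vanishing per-sample gradients
at the optimum, one SGD step with `α ≤ 1/ℒ` contracts the squared distance to the
optimum in expectation. -/
theorem sgd_one_step_interpolation {d : ℕ} {Ω : Type*} [MeasurableSpace Ω]
    (μ : Measure Ω) [IsProbabilityMeasure μ]
    (f : Ω → EuclideanSpace ℝ (Fin d) → ℝ)
    (F : EuclideanSpace ℝ (Fin d) → ℝ)
    (hF : ∀ θ, F θ = ∫ ω, f ω θ ∂μ)
    (θstar : EuclideanSpace ℝ (Fin d))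
    (μc ℒ α : ℝ) (hμc : 0 < μc) (hℒ : 0 < ℒ)
    (hdiff : ∀ ω, Differentiable ℝ (f ω)) (hdF : Differentiable ℝ F)
    (hmin : ∀ θ, F θstar ≤ F θ)
    (hsqc : ∀ θ, F θ + (inner ℝ (gradient F θ) (θstar - θ) : ℝ)
      + μc / 2 * ‖θstar - θ‖ ^ 2 ≤ F θstar)
    (hgradint : ∀ θ, Integrable (fun ω => gradient (f ω) θ) μ)
    (hgradF : ∀ θ, ∫ ω, gradient (f ω) θ ∂μ = gradient F θ)
    (hESint : ∀ θ, Integrable (fun ω => ‖gradient (f ω) θ - gradient (f ω) θstar‖ ^ 2) μ)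
    (hES : ∀ θ, ∫ ω, ‖gradient (f ω) θ - gradient (f ω) θstar‖ ^ 2 ∂μ
      ≤ 2 * ℒ * (F θ - F θstar))
    (hinterp : ∀ ω, gradient (f ω) θstar = 0)
    (hα : 0 < α) (hα' : α ≤ 1 / ℒ) :
    ∀ θ, ∫ ω, ‖(θ - α • gradient (f ω) θ) - θstar‖ ^ 2 ∂μ
      ≤ (1 - α * μc) * ‖θ - θstar‖ ^ 2 := by
  intro θ
  set v : EuclideanSpace ℝ (Fin d) := θ - θstar with hv
  set g : Ω → EuclideanSpace ℝ (Fin d) := fun ω => gradient (f ω) θ with hg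
  have hgint : Integrable g μ := hgradint θ
  have hS : Integrable (fun ω => ‖g ω‖ ^ 2) μ := by
    simpa [hg, hinterp] using hESint θ
  have hSle : ∫ ω, ‖g ω‖ ^ 2 ∂μ ≤ 2 * ℒ * (F θ - F θstar) := by
    simpa [hg, hinterp] using hES θ
  have hexp : ∀ ω, ‖(θ - α • g ω) - θstar‖ ^ 2
      = ‖v‖ ^ 2 - 2 * α * (inner ℝ v (g ω) : ℝ) + α ^ 2 * ‖g ω‖ ^ 2 := by
    intro ω
    have h1 : (θ - α • g ω) - θstar = v - α • g ω := by
      simp only [hv]; abel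
    rw [h1, norm_sub_sq_real, inner_smul_right, norm_smul]
    simp [abs_of_pos hα]
    ring
  have hiint : Integrable (fun ω => (inner ℝ v (g ω) : ℝ)) μ :=
    hgint.const_inner v
  have hinnerInt : ∫ ω, (inner ℝ v (g ω) : ℝ) ∂μ = inner ℝ v (gradient F θ) := by
    rw [integral_inner hgint, hgradF θ]
  have hintval : ∫ ω, ‖(θ - α • g ω) - θstar‖ ^ 2 ∂μ
      = ‖v‖ ^ 2 - 2 * α * (inner ℝ v (gradient F θ) : ℝ) + α ^ 2 * ∫ ω, ‖g ω‖ ^ 2 ∂μ := by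
    simp_rw [hexp]
    rw [integral_add (by exact (integrable_const _).sub (hiint.const_mul _)) (hS.const_mul _),
        integral_sub (integrable_const _) (hiint.const_mul _),
        integral_const, integral_const_mul, integral_const_mul, hinnerInt]
    simp
  have hD : 0 ≤ F θ - F θstar := sub_nonneg.2 (hmin θ)
  have hI : F θ - F θstar + μc / 2 * ‖v‖ ^ 2 ≤ (inner ℝ v (gradient F θ) : ℝ) := by
    have h := hsqc θ
    have h2 : (inner ℝ (gradient F θ) (θstar - θ) : ℝ) = -(inner ℝ v (gradient F θ) : ℝ) := by
      rw [show θstar - θ = -v by simp [hv], inner_neg_right, real_inner_comm]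
    have h3 : ‖θstar - θ‖ = ‖v‖ := by
      rw [show θstar - θ = -v by simp [hv], norm_neg]
    rw [h2, h3] at h
    linarith
  have hαℒ : α * ℒ ≤ 1 := by
    calc α * ℒ ≤ (1 / ℒ) * ℒ := by nlinarith
    _ = 1 := by field_simp
  have hS0 : α ^ 2 * ∫ ω, ‖g ω‖ ^ 2 ∂μ ≤ α ^ 2 * (2 * ℒ * (F θ - F θstar)) :=
    mul_le_mul_of_nonneg_left hSle (sq_nonneg α)
  rw [hintval]
  nlinarith [hS0, mul_le_mul_of_nonneg_left hI (le_of_lt (by linarith : (0:ℝ) < 2*α)), mul_nonneg hα.le hD, mul_nonneg (mul_nonneg hα.le hα.le) (mul_nonneg hℒ.le hD)]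
end

section
/- (One-step SGD inequality with gradient noise.) Suppose f is μ-strongly quasi-convex with minimizer θ*, E_ξ[∇f_ξ(θ)] = ∇f(θ), expected smoothness holds with constant ℒ, and σ² = E_ξ[‖∇f_ξ(θ*)‖²]. Then for any θ and 0 < α ≤ 1/(2ℒ), the SGD update θ⁺ = θ − α∇f_ξ(θ) satisfies E_ξ[‖θ⁺ − θ*‖²] ≤ (1 − αμ)‖θ − θ*‖² + 2α²σ². -/
open MeasureTheory

/-- One-step SGD inequality with gradient noise: with strong quasi-convexity,
unbiased stochastic gradients, expected smoothness, and gradient noise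
`σ² = E_ξ[‖∇f_ξ(θ*)‖²]`, one SGD step with `α ≤ 1/(2ℒ)` satisfies
`E‖θ⁺ − θ*‖² ≤ (1 − αμ)‖θ − θ*‖² + 2α²σ²`. -/
theorem sgd_one_step_noise {d : ℕ} {Ω : Type*} [MeasurableSpace Ω]
    (μ : Measure Ω) [IsProbabilityMeasure μ]
    (f : Ω → EuclideanSpace ℝ (Fin d) → ℝ)
    (F : EuclideanSpace ℝ (Fin d) → ℝ)
    (hF : ∀ θ, F θ = ∫ ω, f ω θ ∂μ)
    (θstar : EuclideanSpace ℝ (Fin d))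
    (μc ℒ α σ2 : ℝ) (hμc : 0 < μc) (hℒ : 0 < ℒ)
    (hdiff : ∀ ω, Differentiable ℝ (f ω)) (hdF : Differentiable ℝ F)
    (hmin : ∀ θ, F θstar ≤ F θ)
    (hsqc : ∀ θ, F θ + (inner ℝ (gradient F θ) (θstar - θ) : ℝ)
      + μc / 2 * ‖θstar - θ‖ ^ 2 ≤ F θstar)
    (hgradint : ∀ θ, Integrable (fun ω => gradient (f ω) θ) μ)
    (hgradF : ∀ θ, ∫ ω, gradient (f ω) θ ∂μ = gradient F θ)
    (hESint : ∀ θ, Integrable (fun ω => ‖gradient (f ω) θ - gradient (f ω) θstar‖ ^ 2) μ)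
    (hES : ∀ θ, ∫ ω, ‖gradient (f ω) θ - gradient (f ω) θstar‖ ^ 2 ∂μ
      ≤ 2 * ℒ * (F θ - F θstar))
    (hσint : Integrable (fun ω => ‖gradient (f ω) θstar‖ ^ 2) μ)
    (hσ : σ2 = ∫ ω, ‖gradient (f ω) θstar‖ ^ 2 ∂μ)
    (hα : 0 < α) (hα' : α ≤ 1 / (2 * ℒ)) :
    ∀ θ, ∫ ω, ‖(θ - α • gradient (f ω) θ) - θstar‖ ^ 2 ∂μ
      ≤ (1 - α * μc) * ‖θ - θstar‖ ^ 2 + 2 * α ^ 2 * σ2 := by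
  intro θ
  set v := θ - θstar with hv
  set g : Ω → EuclideanSpace ℝ (Fin d) := fun ω => gradient (f ω) θ with hg
  set gs : Ω → EuclideanSpace ℝ (Fin d) := fun ω => gradient (f ω) θstar with hgs
  -- pointwise expansion
  have hkey : ∀ ω, ‖(θ - α • g ω) - θstar‖ ^ 2
      = ‖v‖ ^ 2 - 2 * α * (inner ℝ (g ω) v : ℝ) + α ^ 2 * ‖g ω‖ ^ 2 := by
    intro ω
    have h1 : (θ - α • g ω) - θstar = v - α • g ω := by
      rw [hv]; abel
    rw [h1, norm_sub_sq_real, real_inner_smul_right, real_inner_comm, norm_smul]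
    rw [mul_pow, Real.norm_eq_abs, sq_abs]
    ring
  -- integrability
  have hI2 : Integrable (fun ω => (inner ℝ (g ω) v : ℝ)) μ := by
    have h := ((innerSL ℝ v).integrable_comp (hgradint θ))
    have heq : (fun ω => (innerSL ℝ v) (g ω)) = fun ω => (inner ℝ (g ω) v : ℝ) := by
      funext ω
      rw [innerSL_apply_apply, real_inner_comm]
    rwa [heq] at h
  have hptwise : ∀ ω : Ω, ‖g ω‖ ^ 2 ≤ 2 * ‖g ω - gs ω‖ ^ 2 + 2 * ‖gs ω‖ ^ 2 := by
    intro ω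
    have h3 : ‖g ω‖ ≤ ‖g ω - gs ω‖ + ‖gs ω‖ := by
      calc ‖g ω‖ = ‖g ω - gs ω + gs ω‖ := by congr 1; abel
      _ ≤ _ := norm_add_le _ _
    nlinarith [pow_le_pow_left₀ (norm_nonneg (g ω)) h3 2,
      sq_nonneg (‖g ω - gs ω‖ - ‖gs ω‖)]
  have hI1 : Integrable (fun ω => ‖g ω‖ ^ 2) μ := by
    have hb : Integrable (fun ω => 2 * ‖g ω - gs ω‖ ^ 2 + 2 * ‖gs ω‖ ^ 2) μ :=
      ((hESint θ).const_mul 2).add (hσint.const_mul 2)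
    refine hb.mono' ((hgradint θ).aestronglyMeasurable.norm.pow 2)
      (Filter.Eventually.of_forall fun ω => ?_)
    rw [Real.norm_eq_abs, abs_of_nonneg (by positivity)]
    exact hptwise ω
  -- compute the integral
  have hint : ∫ ω, ‖(θ - α • g ω) - θstar‖ ^ 2 ∂μ
      = ‖v‖ ^ 2 - 2 * α * (inner ℝ (gradient F θ) v : ℝ) + α ^ 2 * ∫ ω, ‖g ω‖ ^ 2 ∂μ := by
    calc ∫ ω, ‖(θ - α • g ω) - θstar‖ ^ 2 ∂μ
        = ∫ ω, (‖v‖ ^ 2 - 2 * α * (inner ℝ (g ω) v : ℝ) + α ^ 2 * ‖g ω‖ ^ 2) ∂μ := by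
          exact integral_congr_ae (Filter.Eventually.of_forall hkey)
      _ = (∫ ω, (‖v‖ ^ 2 - 2 * α * (inner ℝ (g ω) v : ℝ)) ∂μ)
            + ∫ ω, α ^ 2 * ‖g ω‖ ^ 2 ∂μ := by
          exact integral_add ((integrable_const _).sub (hI2.const_mul _)) (hI1.const_mul _)
      _ = (∫ _ω, (‖v‖ ^ 2 : ℝ) ∂μ) - (∫ ω, 2 * α * (inner ℝ (g ω) v : ℝ) ∂μ)
            + α ^ 2 * ∫ ω, ‖g ω‖ ^ 2 ∂μ := by
          rw [integral_sub (integrable_const _) (hI2.const_mul _), integral_const_mul, integral_const_mul]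
      _ = ‖v‖ ^ 2 - 2 * α * (inner ℝ (gradient F θ) v : ℝ) + α ^ 2 * ∫ ω, ‖g ω‖ ^ 2 ∂μ := by
          have h4 : ∫ ω, (inner ℝ (g ω) v : ℝ) ∂μ = (inner ℝ (gradient F θ) v : ℝ) := by
            rw [real_inner_comm, ← hgradF θ, ← integral_inner (hgradint θ) v]
            exact integral_congr_ae
              (Filter.Eventually.of_forall fun ω => real_inner_comm _ _)
          rw [integral_const_mul, h4, integral_const]
          simp
  rw [hint]
  -- bounds
  have hB : (0:ℝ) ≤ F θ - F θstar := by linarith [hmin θ]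
  have hA : ∫ ω, ‖g ω‖ ^ 2 ∂μ ≤ 2 * (2 * ℒ * (F θ - F θstar)) + 2 * σ2 := by
    have hmono : ∫ ω, ‖g ω‖ ^ 2 ∂μ
        ≤ ∫ ω, (2 * ‖g ω - gs ω‖ ^ 2 + 2 * ‖gs ω‖ ^ 2) ∂μ :=
      integral_mono hI1 (((hESint θ).const_mul 2).add (hσint.const_mul 2)) hptwise
    rw [integral_add ((hESint θ).const_mul 2) (hσint.const_mul 2),
      integral_const_mul, integral_const_mul] at hmono
    rw [hσ]
    have := hES θ
    nlinarith
  have hIP : F θ - F θstar + μc / 2 * ‖v‖ ^ 2 ≤ (inner ℝ (gradient F θ) v : ℝ) := by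
    have h5 := hsqc θ
    have h6 : θstar - θ = -v := by rw [hv]; abel
    rw [h6, inner_neg_right, norm_neg] at h5
    linarith
  have hαℒ : α * ℒ ≤ 1 / 2 := by
    rw [le_div_iff₀ (by positivity)] at hα'
    linarith
  set A := ∫ ω, ‖g ω‖ ^ 2 ∂μ with hA'
  have h1 : 2 * α * (F θ - F θstar + μc / 2 * ‖v‖ ^ 2)
      ≤ 2 * α * (inner ℝ (gradient F θ) v : ℝ) :=
    mul_le_mul_of_nonneg_left hIP (by linarith)
  have h2 : α ^ 2 * A ≤ α ^ 2 * (2 * (2 * ℒ * (F θ - F θstar)) + 2 * σ2) :=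
    mul_le_mul_of_nonneg_left hA (sq_nonneg α)
  have h3 : α ^ 2 * (2 * (2 * ℒ * (F θ - F θstar))) ≤ 2 * α * (F θ - F θstar) := by
    nlinarith [mul_nonneg (by linarith : (0:ℝ) ≤ 1 - 2 * (α * ℒ))
      (mul_nonneg hα.le hB)]
  nlinarith
end
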